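/- arXiv:1702.03868 — 5 statements merged into one kernel-verified Lean document; each statement's English description precedes it below -/
import Mathlib

section
/- Let n ≥ 1 and m ≥ 0 be integers and let x ∈ [-1, 1). Then ∫₀ˣ t^{n-1} (ln(1-t))^m dt = (1/n)(xⁿ - 1)(ln(1-x))^m + m!·((-1)^m/n)·Σ_{1 ≤ k_m ≤ ⋯ ≤ k₁ ≤ n} 1/(k₁⋯k_m) - (1/n)·Σ_{i=1}^{m} (-1)^{i-1} i!·C(m,i)·(ln(1-x))^{m-i}·Σ_{1 ≤ k_i ≤ ⋯ ≤ k₁ ≤ n} (x^{k_i} - 1)/(k₁⋯k_i), where for m = 0 the weighted sum Σ_{1 ≤ k_m ≤ ⋯ ≤ k₁ ≤ n} f(k_m)/(k₁⋯k_m) is interpreted as f(n). -/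
open scoped BigOperators Classical

noncomputable section

/-- Polylogarithm `Li_s(x) = Σ_{n ≥ 1} x^n / n^s`. -/
def polylog (s : ℕ) (x : ℝ) : ℝ := ∑' n : ℕ, x ^ (n + 1) / ((n : ℝ) + 1) ^ s

/-- Riemann zeta value at a natural argument, `ζ(s) = Σ_{n ≥ 1} 1 / n^s`. -/
def rzeta (s : ℕ) : ℝ := ∑' n : ℕ, 1 / ((n : ℝ) + 1) ^ s

/-- Alternating multiple zeta value
`ζ(s₁,…,s_k) = Σ_{n₁ > ⋯ > n_k ≥ 1} ∏_j sgn(s_j)^{n_j} / n_j^{|s_j|}`. -/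
def amzv (s : List ℤ) : ℝ :=
  ∑' f : {f : Fin s.length → ℕ // StrictAnti f ∧ ∀ i, 0 < f i},
    ∏ i : Fin s.length,
      (if s.get i < 0 then (-1 : ℝ) else 1) ^ (f.1 i) / ((f.1 i : ℝ)) ^ (s.get i).natAbs

/-- Alternating multiple zeta star value
`ζ*(s₁,…,s_k) = Σ_{n₁ ≥ ⋯ ≥ n_k ≥ 1} ∏_j sgn(s_j)^{n_j} / n_j^{|s_j|}`. -/
def amzvStar (s : List ℤ) : ℝ :=
  ∑' f : {f : Fin s.length → ℕ // Antitone f ∧ ∀ i, 0 < f i},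
    ∏ i : Fin s.length,
      (if s.get i < 0 then (-1 : ℝ) else 1) ^ (f.1 i) / ((f.1 i : ℝ)) ^ (s.get i).natAbs

/-- Multiple harmonic number
`ζ_n(s₁,…,s_k) = Σ_{n ≥ n₁ > ⋯ > n_k ≥ 1} ∏_j sgn(s_j)^{n_j} / n_j^{|s_j|}`. -/
def mhn (n : ℕ) (s : List ℤ) : ℝ :=
  ∑' f : {f : Fin s.length → ℕ // StrictAnti f ∧ (∀ i, 0 < f i) ∧ ∀ i, f i ≤ n},
    ∏ i : Fin s.length,
      (if s.get i < 0 then (-1 : ℝ) else 1) ^ (f.1 i) / ((f.1 i : ℝ)) ^ (s.get i).natAbs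

/-- Multiple polylogarithm
`Li_{s₁,…,s_k}(x) = Σ_{n₁ > ⋯ > n_k ≥ 1} x^{n₁} / (n₁^{s₁} ⋯ n_k^{s_k})`
(note `n₁ = sup of the n_i`). -/
def mpolylog (s : List ℕ) (x : ℝ) : ℝ :=
  ∑' f : {f : Fin s.length → ℕ // StrictAnti f ∧ ∀ i, 0 < f i},
    x ^ (Finset.univ.sup f.1) / ∏ i : Fin s.length, ((f.1 i : ℝ)) ^ (s.get i)

/-- Weighted sum over weakly increasing chains `1 ≤ k_m ≤ ⋯ ≤ k₁ ≤ n`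
of `g(k_m) / (k₁ ⋯ k_m)`, interpreted as `g(n)` if `m = 0`.
Here `f i + 1` encodes `k_{i+1}`. -/
def chainSum (n m : ℕ) (g : ℕ → ℝ) : ℝ :=
  if h : m = 0 then g n
  else
    ∑ f ∈ Finset.univ.filter
        (fun f : Fin m → Fin n => ∀ i j : Fin m, i ≤ j → f j ≤ f i),
      g ((f ⟨m - 1, Nat.sub_lt (Nat.pos_of_ne_zero h) Nat.one_pos⟩ : ℕ) + 1) /
        ∏ i : Fin m, (((f i : ℕ) : ℝ) + 1)

/-- `I(k) = ∫₀¹ ln(1+x)^k ln(1-x)/(1+x) dx`. -/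
def Ik (k : ℕ) : ℝ := ∫ x in (0:ℝ)..1, Real.log (1 + x) ^ k * Real.log (1 - x) / (1 + x)

end
set_option maxHeartbeats 1000000
open intervalIntegral in
theorem _aux_integral_pow (x:ℝ) (p:ℕ) : ∫ t in (0:ℝ)..x, t ^ p = (x^(p+1) - 0^(p+1))/((p:ℝ)+1) := integral_pow p

lemma sum_castLE (n k m : ℕ) (hk : k < n) (V : (Fin m → ℕ) → ℝ) :
    ∑ t ∈ Finset.univ.filter
        (fun t : Fin m → Fin n => (∀ i, (t i : ℕ) ≤ k) ∧ ∀ i j, i ≤ j → t j ≤ t i),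
      V (fun i => (t i : ℕ))
    = ∑ t ∈ Finset.univ.filter
        (fun t : Fin m → Fin (k+1) => ∀ i j, i ≤ j → t j ≤ t i),
      V (fun i => (t i : ℕ)) := by
  apply Finset.sum_nbij'
    (i := fun t => fun i => (⟨min (t i : ℕ) k, Nat.lt_succ_of_le (min_le_right _ _)⟩ : Fin (k+1)))
    (j := fun t => fun i => Fin.castLE hk (t i))
  · intro a ha
    simp only [Finset.mem_filter, Finset.mem_univ, true_and] at ha ⊢
    intro i j hij
    have := ha.2 i j hij
    simp only [Fin.mk_le_mk, Fin.le_def] at this ⊢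
    omega
  · intro a ha
    simp only [Finset.mem_filter, Finset.mem_univ, true_and] at ha ⊢
    refine ⟨fun i => ?_, fun i j hij => ?_⟩
    · simpa [Fin.castLE] using Nat.lt_succ_iff.mp (a i).isLt
    · have := ha i j hij
      simp only [Fin.le_def] at this ⊢
      simpa using this
  · intro a ha
    simp only [Finset.mem_filter, Finset.mem_univ, true_and] at ha
    funext i
    simp [Fin.ext_iff, min_eq_left (ha.1 i)]
  · intro a ha
    funext i
    simp [Fin.ext_iff, Nat.lt_succ_iff.mp (a i).isLt]
  · intro a ha
    simp only [Finset.mem_filter, Finset.mem_univ, true_and] at ha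
    congr 1
    funext i
    simp [min_eq_left (ha.1 i)]

lemma chainSum_zero (n : ℕ) (g : ℕ → ℝ) : chainSum n 0 g = g n := by
  simp [chainSum]

lemma chainSum_succ (n m : ℕ) (g : ℕ → ℝ) :
    chainSum n (m+1) g = ∑ k ∈ Finset.range n, (1/((k:ℝ)+1)) * chainSum (k+1) m g := by
  rw [chainSum, dif_neg (Nat.succ_ne_zero m)]
  rw [Finset.sum_filter, ← Equiv.sum_comp (Fin.consEquiv (fun _ => Fin n)), ← Fin.sum_univ_eq_sum_range]
  rw [Fintype.sum_prod_type]
  apply Finset.sum_congr rfl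
  intro k _
  have hcons : ∀ (t : Fin m → Fin n),
      Fin.consEquiv (fun _ => Fin n) (k, t) = Fin.cons (α := fun _ => Fin n) k t := fun t => rfl
  have hprod : ∀ (t : Fin m → Fin n),
      (∏ i : Fin (m+1), ((((Fin.cons (α := fun _ => Fin n) k t i) : ℕ) : ℝ) + 1))
        = (((k:ℕ):ℝ)+1) * ∏ i : Fin m, (((t i : ℕ):ℝ)+1) := by
    intro t
    rw [Fin.prod_univ_succ]
    simp
  have hP : ∀ (t : Fin m → Fin n),
      (∀ i j : Fin (m+1), i ≤ j → Fin.cons (α := fun _ => Fin n) k t j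
          ≤ Fin.cons (α := fun _ => Fin n) k t i)
        ↔ ((∀ i, (t i : ℕ) ≤ (k : ℕ)) ∧ ∀ i j : Fin m, i ≤ j → t j ≤ t i) := by
    intro t
    constructor
    · intro h
      refine ⟨fun i => ?_, fun i j hij => ?_⟩
      · have := h 0 i.succ (Fin.zero_le _)
        simp only [Fin.le_def, Fin.cons_succ, Fin.cons_zero] at this
        exact this
      · have := h i.succ j.succ (by simp only [Fin.le_def, Fin.val_succ]; omega)
        simp only [Fin.le_def, Fin.cons_succ] at this
        exact this
    · rintro ⟨h1, h2⟩ i j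
      refine Fin.cases ?_ (fun i' => ?_) i <;> refine Fin.cases ?_ (fun j' => ?_) j <;> intro hij
      · exact le_refl _
      · simp only [Fin.le_def, Fin.cons_succ, Fin.cons_zero]
        exact h1 j'
      · exact absurd hij (by simp [Fin.le_def])
      · simp only [Fin.le_def, Fin.cons_succ]
        exact h2 i' j' (by simp only [Fin.le_def, Fin.val_succ] at hij ⊢; omega)
  cases m with
  | zero =>
    rw [chainSum_zero]
    rw [Fintype.sum_eq_single (fun _ : Fin 0 => (⟨(k:ℕ), k.isLt⟩ : Fin n)) (by
      intro t ht; exact absurd (funext fun i => i.elim0) ht)]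
    simp only [hcons, hP]
    rw [if_pos ⟨fun i => i.elim0, fun i j _ => le_refl _⟩]
    rw [hprod]
    have e0 : (⟨0 + 1 - 1, Nat.sub_lt (Nat.pos_of_ne_zero (Nat.succ_ne_zero 0)) Nat.one_pos⟩
        : Fin 1) = 0 := rfl
    rw [e0, Fin.cons_zero]
    simp [div_eq_mul_inv, mul_comm]
  | succ m' =>
    rw [chainSum, dif_neg (Nat.succ_ne_zero m')]
    simp only [hcons, hP]
    rw [Finset.mul_sum]
    rw [← Finset.sum_filter]
    have key := sum_castLE n (k:ℕ) (m'+1) k.isLt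
      (fun u : Fin (m'+1) → ℕ => g (u ⟨m', Nat.lt_succ_self _⟩ + 1)
        / ((((k:ℕ):ℝ)+1) * ∏ i : Fin (m'+1), (((u i):ℝ)+1)))
    refine Eq.trans ?_ (key.trans ?_)
    · apply Finset.sum_congr rfl
      intro t _
      have hlast : Fin.cons (α := fun _ => Fin n) k t
          (⟨m' + 1 + 1 - 1, Nat.sub_lt (Nat.pos_of_ne_zero (Nat.succ_ne_zero _)) Nat.one_pos⟩
            : Fin (m'+2)) = t ⟨m', Nat.lt_succ_self _⟩ := rfl
      rw [hlast, hprod]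
    · apply Finset.sum_congr rfl
      intro t _
      have hidx : (⟨m' + 1 - 1, Nat.sub_lt (Nat.pos_of_ne_zero (Nat.succ_ne_zero _)) Nat.one_pos⟩
          : Fin (m'+1)) = ⟨m', Nat.lt_succ_self _⟩ := rfl
      rw [hidx]
      have hh : ∀ a b c : ℝ, a / (b * c) = 1/b * (a/c) := by
        intro a b c
        rw [one_div, div_eq_mul_inv, div_eq_mul_inv, mul_inv]
        ring
      rw [hh]

lemma aux_logcont (x : ℝ) (hx : x < 1) (q : ℕ) :
    ContinuousOn (fun t : ℝ => Real.log (1-t)^q) (Set.uIcc 0 x) := by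
  apply ContinuousOn.pow
  apply ContinuousOn.log
  · exact (continuous_const.sub continuous_id).continuousOn
  · intro t ht
    have h1 : t ≤ max 0 x := (Set.mem_uIcc.mp ht).elim (fun h => le_max_of_le_right h.2)
      (fun h => le_max_of_le_left h.2)
    have : t < 1 := lt_of_le_of_lt h1 (max_lt one_pos hx)
    linarith

lemma aux_integrable (x : ℝ) (hx : x < 1) (p q : ℕ) :
    IntervalIntegrable (fun t : ℝ => t^p * Real.log (1-t)^q) MeasureTheory.volume 0 x := by
  apply ContinuousOn.intervalIntegrable
  exact ((continuous_pow p).continuousOn).mul (aux_logcont x hx q)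

lemma aux_hasDeriv (n m : ℕ) (hn : 1 ≤ n) (t : ℝ) (ht : t < 1) :
    HasDerivAt (fun s : ℝ => (s^n - 1)/n * Real.log (1-s)^(m+1))
      (t^(n-1) * Real.log (1-t)^(m+1)
        + ((m+1:ℝ)/n) * (∑ k ∈ Finset.range n, t^k) * Real.log (1-t)^m) t := by
  have h1t : (1:ℝ) - t ≠ 0 := by linarith
  have hnR : (n:ℝ) ≠ 0 := Nat.cast_ne_zero.mpr (by omega)
  have h1 : HasDerivAt (fun s : ℝ => s^n - 1) ((n:ℝ) * t^(n-1)) t :=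
    (hasDerivAt_pow n t).sub_const 1
  have h2 : HasDerivAt (fun s : ℝ => Real.log (1-s)) ((-1)/(1-t)) t := by
    have := ((hasDerivAt_id t).const_sub 1).log h1t
    simpa using this
  have h3 : HasDerivAt (fun s : ℝ => Real.log (1-s)^(m+1))
      ((m+1 : ℕ) * Real.log (1-t)^m * ((-1)/(1-t))) t := by
    have := h2.fun_pow (m+1)
    simpa using this
  have h4 := (h1.div_const (n:ℝ)).fun_mul h3
  refine h4.congr_deriv ?_
  rw [← geom_sum_mul]
  push_cast
  field_simp
  ring

lemma int_rec (n m : ℕ) (hn : 1 ≤ n) (x : ℝ) (hx2 : x < 1) :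
    ∫ t in (0:ℝ)..x, t ^ (n - 1) * Real.log (1 - t) ^ (m+1)
      = (x^n - 1)/n * Real.log (1-x)^(m+1)
        - ((m+1:ℝ)/n) * ∑ k ∈ Finset.range n,
            ∫ t in (0:ℝ)..x, t ^ k * Real.log (1 - t) ^ m := by
  have hmem : ∀ t ∈ Set.uIcc (0:ℝ) x, t < 1 := by
    intro t ht
    have h1 : t ≤ max 0 x := (Set.mem_uIcc.mp ht).elim (fun h => le_max_of_le_right h.2)
      (fun h => le_max_of_le_left h.2)
    exact lt_of_le_of_lt h1 (max_lt one_pos hx2)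
  have hint1 : IntervalIntegrable (fun t : ℝ => t^(n-1) * Real.log (1-t)^(m+1))
      MeasureTheory.volume 0 x := aux_integrable x hx2 _ _
  have hint2 : IntervalIntegrable
      (fun t : ℝ => ((m+1:ℝ)/n) * (∑ k ∈ Finset.range n, t^k) * Real.log (1-t)^m)
      MeasureTheory.volume 0 x := by
    apply ContinuousOn.intervalIntegrable
    exact ((continuous_const.mul (continuous_finset_sum _
      (fun k _ => continuous_pow k))).continuousOn).mul (aux_logcont x hx2 m)
  have hFTC := intervalIntegral.integral_eq_sub_of_hasDerivAt
    (f := fun s : ℝ => (s^n - 1)/n * Real.log (1-s)^(m+1))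
    (fun t ht => aux_hasDeriv n m hn t (hmem t ht)) (hint1.add hint2)
  rw [intervalIntegral.integral_add hint1 hint2] at hFTC
  have h0 : (fun s : ℝ => (s^n - 1)/(n:ℝ) * Real.log (1-s)^(m+1)) 0 = 0 := by
    simp
  have h0x : (fun s : ℝ => (s^n - 1)/(n:ℝ) * Real.log (1-s)^(m+1)) x
      = (x^n - 1)/(n:ℝ) * Real.log (1-x)^(m+1) := rfl
  rw [show (0 ^ n - 1) / (n:ℝ) * Real.log (1 - 0) ^ (m + 1) = 0 from h0, sub_zero] at hFTC
  have h5 : ∫ t in (0:ℝ)..x, ((m+1:ℝ)/n) * (∑ k ∈ Finset.range n, t^k) * Real.log (1-t)^m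
      = ((m+1:ℝ)/n) * ∑ k ∈ Finset.range n, ∫ t in (0:ℝ)..x, t^k * Real.log (1-t)^m := by
    rw [show (fun t : ℝ => ((m+1:ℝ)/n) * (∑ k ∈ Finset.range n, t^k) * Real.log (1-t)^m)
        = fun t : ℝ => ((m+1:ℝ)/n) * ∑ k ∈ Finset.range n, t^k * Real.log (1-t)^m from
        funext fun t => by rw [mul_assoc, Finset.sum_mul]]
    rw [intervalIntegral.integral_const_mul,
      intervalIntegral.integral_finset_sum (fun k _ => aux_integrable x hx2 k m)]
  rw [h5] at hFTC
  linarith [hFTC]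

theorem stmt0 (n m : ℕ) (hn : 1 ≤ n) (x : ℝ) (hx1 : -1 ≤ x) (hx2 : x < 1) :
    ∫ t in (0:ℝ)..x, t ^ (n - 1) * Real.log (1 - t) ^ m =
      (1 / (n : ℝ)) * (x ^ n - 1) * Real.log (1 - x) ^ m
        + (m.factorial : ℝ) * ((-1) ^ m / (n : ℝ)) * chainSum n m (fun _ => 1)
        - (1 / (n : ℝ)) * ∑ i ∈ Finset.Icc 1 m,
            (-1) ^ (i - 1) * (i.factorial : ℝ) * (m.choose i : ℝ) *
              Real.log (1 - x) ^ (m - i) * chainSum n i (fun j => x ^ j - 1) := by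
  induction m generalizing n hn with
  | zero =>
    have hne : (n:ℝ) ≠ 0 := Nat.cast_ne_zero.mpr (by omega)
    simp only [pow_zero, mul_one, chainSum_zero]
    rw [show Finset.Icc 1 0 = ∅ from rfl, Finset.sum_empty,
      _aux_integral_pow x (n-1), show n - 1 + 1 = n from by omega]
    push_cast
    field_simp
    rw [Nat.cast_sub hn, zero_pow (by omega)]
    simp only [Nat.factorial_zero, Nat.cast_one]
    ring
  | succ m IH =>
    rw [int_rec n m hn x hx2]
    set L := Real.log (1 - x) with hL
    have hIH : ∀ k ∈ Finset.range n, (∫ t in (0:ℝ)..x, t^k * Real.log (1-t)^m)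
        = (1/((k:ℝ)+1)) * ((x^(k+1) - 1) * L^m
            + (m.factorial:ℝ) * (-1)^m * chainSum (k+1) m (fun _ => 1)
            + (-1) * ∑ i ∈ Finset.Icc 1 m, (-1)^(i-1) * (i.factorial:ℝ) * (m.choose i : ℝ) *
                L^(m-i) * chainSum (k+1) i (fun j => x^j - 1)) := by
      intro k _
      have h := IH (k+1) (by omega)
      rw [show (k+1) - 1 = k from rfl] at h
      rw [h]
      push_cast
      ring
    rw [Finset.sum_congr rfl hIH]
    have hsplit : ∀ k ∈ Finset.range n, (1/((k:ℝ)+1)) * ((x^(k+1) - 1) * L^m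
            + (m.factorial:ℝ) * (-1)^m * chainSum (k+1) m (fun _ => 1)
            + (-1) * ∑ i ∈ Finset.Icc 1 m, (-1)^(i-1) * (i.factorial:ℝ) * (m.choose i : ℝ) *
                L^(m-i) * chainSum (k+1) i (fun j => x^j - 1))
        = (1/((k:ℝ)+1)) * chainSum (k+1) 0 (fun j => x^j - 1) * L^m
          + (m.factorial:ℝ) * (-1)^m * ((1/((k:ℝ)+1)) * chainSum (k+1) m (fun _ => 1))
          - ∑ i ∈ Finset.Icc 1 m, (-1)^(i-1) * (i.factorial:ℝ) * (m.choose i : ℝ) *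
              L^(m-i) * ((1/((k:ℝ)+1)) * chainSum (k+1) i (fun j => x^j - 1)) := by
      intro k _
      rw [chainSum_zero]
      have hs : ∑ i ∈ Finset.Icc 1 m, (-1:ℝ)^(i-1) * (i.factorial:ℝ) * (m.choose i : ℝ) *
              L^(m-i) * ((1/((k:ℝ)+1)) * chainSum (k+1) i (fun j => x^j - 1))
          = (1/((k:ℝ)+1)) * ∑ i ∈ Finset.Icc 1 m, (-1:ℝ)^(i-1) * (i.factorial:ℝ) *
              (m.choose i : ℝ) * L^(m-i) * chainSum (k+1) i (fun j => x^j - 1) := by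
        rw [Finset.mul_sum]
        exact Finset.sum_congr rfl (fun i _ => by ring)
      rw [hs]
      ring
    rw [Finset.sum_congr rfl hsplit, Finset.sum_sub_distrib, Finset.sum_add_distrib]
    rw [← Finset.sum_mul, ← chainSum_succ n 0 (fun j => x^j - 1)]
    rw [← Finset.mul_sum, ← chainSum_succ n m (fun _ => 1)]
    rw [Finset.sum_comm]
    have hS3 : ∀ i ∈ Finset.Icc 1 m,
        ∑ k ∈ Finset.range n, (-1:ℝ)^(i-1) * (i.factorial:ℝ) * (m.choose i : ℝ) *
            L^(m-i) * ((1/((k:ℝ)+1)) * chainSum (k+1) i (fun j => x^j - 1))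
        = (-1:ℝ)^(i-1) * (i.factorial:ℝ) * (m.choose i : ℝ) *
            L^(m-i) * chainSum n (i+1) (fun j => x^j - 1) := by
      intro i _
      rw [← Finset.mul_sum, ← chainSum_succ n i (fun j => x^j - 1)]
    rw [Finset.sum_congr rfl hS3]
    -- convert Icc sums to range sums
    rw [show (Finset.Icc 1 m) = Finset.Ico 1 (m+1) from (Finset.Ico_add_one_right_eq_Icc 1 m).symm,
      Finset.sum_Ico_eq_sum_range]
    conv_rhs => rw [show (Finset.Icc 1 (m+1)) = Finset.Ico 1 (m+2) from
        (Finset.Ico_add_one_right_eq_Icc 1 (m+1)).symm, Finset.sum_Ico_eq_sum_range]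
    rw [show m + 1 - 1 = m from rfl, show m + 2 - 1 = m + 1 from rfl]
    rw [Finset.sum_range_succ' (fun j => (-1:ℝ)^((1+j)-1) * (((1+j).factorial):ℝ) *
        (((m+1).choose (1+j)):ℝ) * L^(m+1-(1+j)) * chainSum n (1+j) (fun j => x^j - 1))]
    have hterm : ∀ j ∈ Finset.range m,
        (-1:ℝ)^((1+(j+1))-1) * (((1+(j+1)).factorial):ℝ) * (((m+1).choose (1+(j+1))):ℝ) *
            L^(m+1-(1+(j+1))) * chainSum n (1+(j+1)) (fun j => x^j - 1)
        = (-(m:ℝ)-1) * ((-1:ℝ)^((1+j)-1) * (((1+j).factorial):ℝ) * ((m.choose (1+j)):ℝ) *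
            L^(m-(1+j)) * chainSum n ((1+j)+1) (fun j => x^j - 1)) := by
      intro j _
      rw [show (1+(j+1))-1 = j+1 from by omega, show (1+j)-1 = j from by omega,
        show m+1-(1+(j+1)) = m-(1+j) from by omega, show 1+(j+1) = (1+j)+1 from by omega]
      have hfc : ((((1+j)+1).factorial):ℝ) * (((m+1).choose ((1+j)+1)):ℝ)
          = ((m:ℝ)+1) * (((1+j).factorial):ℝ) * ((m.choose (1+j)):ℝ) := by
        have h := Nat.add_one_mul_choose_eq m (1+j)
        have hR : ((m:ℝ)+1) * (m.choose (1+j) : ℝ)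
            = ((m+1).choose (1+j+1) : ℝ) * ((1:ℝ)+(j:ℝ)+1) := by
          exact_mod_cast h
        rw [Nat.factorial_succ]
        push_cast
        linear_combination (-((1+j).factorial:ℝ)) * hR
      rw [pow_succ]
      linear_combination (-(-1:ℝ)^j * L^(m-(1+j)) * chainSum n ((1+j)+1) (fun j => x^j - 1)) * hfc
    rw [Finset.sum_congr rfl hterm, ← Finset.mul_sum]
    have hF1 : (-1:ℝ)^((1+0)-1) * (((1+0).factorial):ℝ) * (((m+1).choose (1+0)):ℝ) *
        L^(m+1-(1+0)) * chainSum n (1+0) (fun j => x^j - 1)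
        = ((m:ℝ)+1) * (L^m * chainSum n 1 (fun j => x^j - 1)) := by
      simp [Nat.choose_one_right]
      ring
    rw [hF1, show (0:ℕ)+1 = 1 from rfl]
    push_cast [Nat.factorial_succ]
    ring
end

section
/- For every positive integer m, ∫₀¹ (ln(1+t))^m · ln(1-t)/(1+t) dt = (1/(m+1))·(ln 2)^{m+2} - ζ(2)·(ln 2)^m - Σ_{k=1}^{m} C(m,k)·(-1)^{k+1}·[ Σ_{l=1}^{k} l!·C(k,l)·(ln 2)^{m-l}·Li_{l+2}(1/2) - k!·(ln 2)^{m-k}·ζ(k+2) ]. -/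
open scoped BigOperators Classical

/-!
Substituting `u = 1 + t`, the integral becomes `∫₁² log(u)^m log(2 - u) / u du`, and
`log 2 - log(2 - u) = ∑_{n ≥ 1} (u/2)^n / n` on `(1, 2)` with nonnegative terms, so it may be
integrated termwise. Repeated integration by parts gives `∫₁² u^(n-1) log(u)^m du` as a finite sum;
the contributions of the upper endpoint sum over `n` to `ζ(k + 2)` and that of the lower endpoint
to `Li_{m+2}(1/2)`. The double sum of the stated formula collapses to the single polylogarithm
`(-1)^m m! Li_{m+2}(1/2)` by `∑_k (-1)^k C(m,k) C(k,l) = (-1)^m δ_{lm}`.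
-/

section

open Real Finset intervalIntegral MeasureTheory
open scoped Nat Interval

theorem hasSum_polylog {x : ℝ} (hx : |x| < 1) (s : ℕ) :
    HasSum (fun n : ℕ => x ^ (n + 1) / ((n : ℝ) + 1) ^ s) (polylog s x) := by
  refine (Summable.of_norm_bounded
    ((summable_nat_add_iff 1).mpr (summable_geometric_of_lt_one (abs_nonneg x) hx))
    fun n => ?_).hasSum
  rw [norm_div, norm_pow, norm_pow, Real.norm_eq_abs, Real.norm_of_nonneg (by positivity)]
  exact div_le_self (by positivity) (one_le_pow₀ (by simp))

theorem hasSum_rzeta {s : ℕ} (hs : 2 ≤ s) :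
    HasSum (fun n : ℕ => 1 / ((n : ℝ) + 1) ^ s) (rzeta s) := by
  refine Summable.hasSum ?_
  exact_mod_cast (summable_nat_add_iff 1).mpr (Real.summable_one_div_nat_pow.mpr (by omega))

theorem hasSum_div_two_pow_div {u : ℝ} (hu : |u| < 2) :
    HasSum (fun n : ℕ => (u / 2) ^ (n + 1) / (n + 1)) (log 2 - log (2 - u)) := by
  have h := hasSum_pow_div_log_of_abs_lt_one (x := u / 2) (by rw [abs_div]; norm_num; linarith)
  rwa [show 1 - u / 2 = (2 - u) / 2 by ring,
    log_div (by linarith [le_abs_self u]) two_ne_zero, neg_sub] at h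

theorem hasSum_intervalIntegral_of_nonneg {a b : ℝ} {F : ℕ → ℝ → ℝ} {f : ℝ → ℝ}
    (hF : ∀ n, IntervalIntegrable (F n) volume a b)
    (hF_nonneg : ∀ n, ∀ t ∈ Set.uIoo a b, 0 ≤ F n t)
    (hFf : ∀ t ∈ Set.uIoo a b, HasSum (fun n => F n t) (f t))
    (hf : IntervalIntegrable f volume a b) :
    HasSum (fun n => ∫ t in a..b, F n t) (∫ t in a..b, f t) := by
  have hae : ∀ᵐ t ∂volume, t ∈ Ι a b → t ∈ Set.uIoo a b := by
    filter_upwards [volume.ae_ne (a ⊔ b)] with t hne ht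
    exact ⟨ht.1, lt_of_le_of_ne ht.2 hne⟩
  refine hasSum_integral_of_dominated_convergence F (fun n => (hF n).def'.aestronglyMeasurable)
    (fun n => hae.mono fun t ht ht' => (Real.norm_of_nonneg (hF_nonneg n t (ht ht'))).le)
    (hae.mono fun t ht ht' => (hFf t (ht ht')).summable)
    (hf.congr_uIoo fun t ht => (hFf t ht).tsum_eq.symm)
    (hae.mono fun t ht ht' => hFf t (ht ht'))

section OneToB

variable {b : ℝ}

theorem pos_of_mem_uIcc_one (hb : 0 < b) {u : ℝ} (hu : u ∈ [[1, b]]) : 0 < u := by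
  rcases Set.mem_uIcc.1 hu with h | h <;> linarith [h.1]

theorem continuousOn_log_uIcc_one (hb : 0 < b) : ContinuousOn log [[1, b]] :=
  continuousOn_log.mono fun _ hu => (pos_of_mem_uIcc_one hb hu).ne'

theorem continuousOn_pow_mul_log_pow (hb : 0 < b) (n m : ℕ) :
    ContinuousOn (fun u : ℝ => u ^ n * log u ^ m) [[1, b]] :=
  (continuous_pow n).continuousOn.mul ((continuousOn_log_uIcc_one hb).pow m)

theorem continuousOn_log_pow_div (hb : 0 < b) (m : ℕ) :
    ContinuousOn (fun u : ℝ => log u ^ m / u) [[1, b]] :=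
  ((continuousOn_log_uIcc_one hb).pow m).div continuousOn_id
    fun _ hu => (pos_of_mem_uIcc_one hb hu).ne'

theorem integral_log_pow_div (hb : 0 < b) (m : ℕ) :
    ∫ u in (1 : ℝ)..b, log u ^ m / u = log b ^ (m + 1) / (m + 1) := by
  have hderiv : ∀ u ∈ [[1, b]],
      HasDerivAt (fun u => log u ^ (m + 1) / (m + 1)) (log u ^ m / u) u := by
    intro u hu
    refine (((hasDerivAt_log (pos_of_mem_uIcc_one hb hu).ne').fun_pow (m + 1)).div_const
      ((m : ℝ) + 1)).congr_deriv ?_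
    push_cast
    field_simp
  rw [integral_eq_sub_of_hasDerivAt hderiv (continuousOn_log_pow_div hb m).intervalIntegrable]
  simp

theorem integral_pow_mul_log_pow_succ (hb : 0 < b) (n m : ℕ) :
    ∫ u in (1 : ℝ)..b, u ^ n * log u ^ (m + 1) =
      b ^ (n + 1) * log b ^ (m + 1) / (n + 1) -
        (m + 1) / (n + 1) * ∫ u in (1 : ℝ)..b, u ^ n * log u ^ m := by
  have hderiv : ∀ u ∈ [[1, b]],
      HasDerivAt (fun u => u ^ (n + 1) * log u ^ (m + 1) / (n + 1))
        (u ^ n * log u ^ (m + 1) + (m + 1) / (n + 1) * (u ^ n * log u ^ m)) u := by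
    intro u hu
    have hu0 := (pos_of_mem_uIcc_one hb hu).ne'
    refine (((hasDerivAt_pow (n + 1) u).fun_mul ((hasDerivAt_log hu0).fun_pow (m + 1))).div_const
      ((n : ℝ) + 1)).congr_deriv ?_
    push_cast
    field_simp
    ring
  have hm := (continuousOn_pow_mul_log_pow hb n m).intervalIntegrable (μ := volume)
  have hm₁ := (continuousOn_pow_mul_log_pow hb n (m + 1)).intervalIntegrable (μ := volume)
  have hftc := integral_eq_sub_of_hasDerivAt hderiv (hm₁.add (hm.const_mul _))
  rw [integral_add hm₁ (hm.const_mul _), intervalIntegral.integral_const_mul] at hftc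
  simp only [log_one, ne_eq, Nat.add_eq_zero_iff, one_ne_zero, and_false, not_false_eq_true,
    zero_pow, mul_zero, zero_div, sub_zero] at hftc
  linarith

theorem integral_pow_mul_log_pow (hb : 0 < b) (n m : ℕ) :
    ∫ u in (1 : ℝ)..b, u ^ n * log u ^ m =
      ∑ k ∈ range (m + 1), (-1) ^ k * (m.descFactorial k : ℝ) * b ^ (n + 1) * log b ^ (m - k) /
          ((n : ℝ) + 1) ^ (k + 1)
        - (-1) ^ m * m ! / ((n : ℝ) + 1) ^ (m + 1) := by
  induction m with
  | zero => simp [integral_pow]; ring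
  | succ m ih =>
    rw [integral_pow_mul_log_pow_succ hb, ih, sum_range_succ' _ (m + 1)]
    have hshift : ∑ k ∈ range (m + 1), (-1) ^ (k + 1) * ((m + 1).descFactorial (k + 1) : ℝ) *
          b ^ (n + 1) * log b ^ (m + 1 - (k + 1)) / ((n : ℝ) + 1) ^ (k + 1 + 1) =
        -((m + 1) / (n + 1) * ∑ k ∈ range (m + 1), (-1) ^ k * (m.descFactorial k : ℝ) *
          b ^ (n + 1) * log b ^ (m - k) / ((n : ℝ) + 1) ^ (k + 1)) := by
      rw [mul_sum, ← sum_neg_distrib]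
      refine sum_congr rfl fun k _ => ?_
      rw [Nat.succ_descFactorial_succ, Nat.add_sub_add_right]
      push_cast
      field_simp
      ring
    rw [hshift, Nat.factorial_succ]
    push_cast
    simp only [pow_zero, Nat.descFactorial_zero, Nat.cast_one]
    generalize (n : ℝ) + 1 = N
    ring

end OneToB

theorem integral_div_two_pow_mul_log_pow_div (n m : ℕ) :
    ∫ u in (1 : ℝ)..2, (u / 2) ^ (n + 1) / (n + 1) * (log u ^ m / u) =
      ∑ k ∈ range (m + 1),
          (-1) ^ k * (m.descFactorial k : ℝ) * log 2 ^ (m - k) * (1 / ((n : ℝ) + 1) ^ (k + 2))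
        - (-1) ^ m * m ! * ((1 / 2) ^ (n + 1) / ((n : ℝ) + 1) ^ (m + 2)) := by
  have hcongr : Set.EqOn (fun u : ℝ => (u / 2) ^ (n + 1) / (n + 1) * (log u ^ m / u))
      (fun u => 1 / (2 ^ (n + 1) * (n + 1)) * (u ^ n * log u ^ m)) [[1, 2]] := by
    intro u hu
    have := (pos_of_mem_uIcc_one two_pos hu).ne'
    simp only [div_pow]
    field_simp
    ring
  rw [integral_congr hcongr, intervalIntegral.integral_const_mul,
    integral_pow_mul_log_pow two_pos, mul_sub, mul_sum]
  congr 1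
  · refine sum_congr rfl fun k _ => ?_
    field_simp
    ring
  · simp only [div_pow, one_pow]
    field_simp
    ring

theorem hasSum_integral_div_two_pow_mul_log_pow_div (m : ℕ) :
    HasSum (fun n : ℕ => ∫ u in (1 : ℝ)..2, (u / 2) ^ (n + 1) / (n + 1) * (log u ^ m / u))
      (∑ k ∈ range (m + 1), (-1) ^ k * (m.descFactorial k : ℝ) * log 2 ^ (m - k) * rzeta (k + 2)
        - (-1) ^ m * m ! * polylog (m + 2) (1 / 2)) := by
  simp_rw [integral_div_two_pow_mul_log_pow_div]
  exact (hasSum_sum fun k _ => (hasSum_rzeta (by omega)).mul_left _).sub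
    ((hasSum_polylog (by norm_num [abs_of_pos]) _).mul_left _)

theorem integral_log_pow_mul_log_two_sub_div (m : ℕ) :
    ∫ u in (1 : ℝ)..2, log u ^ m * log (2 - u) / u =
      log 2 ^ (m + 2) / (m + 1)
        - ∑ k ∈ range (m + 1), (-1) ^ k * (m.descFactorial k : ℝ) * log 2 ^ (m - k) * rzeta (k + 2)
        + (-1) ^ m * m ! * polylog (m + 2) (1 / 2) := by
  have hg := (continuousOn_log_pow_div two_pos m).intervalIntegrable (μ := volume)
  have hlog : IntervalIntegrable (fun u : ℝ => log (2 - u)) volume 1 2 := by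
    have h := (intervalIntegrable_log' (a := 1) (b := 0)).comp_sub_left 2
    norm_num at h
    exact h
  have hf : IntervalIntegrable (fun u => (log 2 - log (2 - u)) * (log u ^ m / u)) volume 1 2 :=
    (intervalIntegrable_const.sub hlog).mul_continuousOn (continuousOn_log_pow_div two_pos m)
  have hsum := hasSum_intervalIntegral_of_nonneg
    (F := fun n u => (u / 2) ^ (n + 1) / (n + 1) * (log u ^ m / u))
    (fun n => ((((continuousOn_id.div_const 2).pow (n + 1)).div_const _).mul
      (continuousOn_log_pow_div two_pos m)).intervalIntegrable)
    (fun n u hu => by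
      rw [Set.uIoo_of_le one_le_two] at hu
      have := log_nonneg hu.1.le
      have := hu.1
      positivity)
    (fun u hu => by
      rw [Set.uIoo_of_le one_le_two] at hu
      exact (hasSum_div_two_pow_div (abs_lt.mpr ⟨by linarith [hu.1], hu.2⟩)).mul_right _)
    hf
  calc ∫ u in (1 : ℝ)..2, log u ^ m * log (2 - u) / u
      = ∫ u in (1 : ℝ)..2, log 2 * (log u ^ m / u) - (log 2 - log (2 - u)) * (log u ^ m / u) := by
        congr 1
        funext u
        ring
    _ = log 2 * (∫ u in (1 : ℝ)..2, log u ^ m / u)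
          - ∫ u in (1 : ℝ)..2, (log 2 - log (2 - u)) * (log u ^ m / u) := by
        rw [integral_sub (hg.const_mul _) hf, intervalIntegral.integral_const_mul]
    _ = _ := by
        rw [integral_log_pow_div two_pos,
          hsum.unique (hasSum_integral_div_two_pow_mul_log_pow_div m)]
        ring

theorem integral_log_one_add_pow_mul_log_one_sub_div_eq (m : ℕ) :
    ∫ t in (0 : ℝ)..1, log (1 + t) ^ m * log (1 - t) / (1 + t) =
      ∫ u in (1 : ℝ)..2, log u ^ m * log (2 - u) / u := by
  have h := intervalIntegral.integral_comp_add_left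
    (fun u : ℝ => log u ^ m * log (2 - u) / u) (1 : ℝ) (a := 0) (b := 1)
  simp only [show ∀ t : ℝ, 2 - (1 + t) = 1 - t by intro t; ring] at h
  norm_num at h
  exact h

theorem alternating_sum_Icc_choose_mul_choose (m l : ℕ) :
    ∑ k ∈ Icc l m, (-1 : ℤ) ^ k * m.choose k * k.choose l = if l = m then (-1) ^ m else 0 := by
  rcases lt_or_ge m l with hml | hlm
  · simp [Icc_eq_empty_of_lt hml, hml.ne']
  calc ∑ k ∈ Icc l m, (-1 : ℤ) ^ k * m.choose k * k.choose l
      = ∑ i ∈ range (m - l + 1), (-1 : ℤ) ^ (l + i) * m.choose (l + i) * (l + i).choose l := by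
        rw [← Finset.Ico_add_one_right_eq_Icc, sum_Ico_eq_sum_range, Nat.sub_add_comm hlm]
    _ = (-1) ^ l * m.choose l * ∑ i ∈ range (m - l + 1), (-1 : ℤ) ^ i * (m - l).choose i := by
        rw [mul_sum]
        refine sum_congr rfl fun i _ => ?_
        have h := Nat.choose_mul (n := m) (Nat.le_add_right l i)
        rw [Nat.add_sub_cancel_left] at h
        rw [pow_add, mul_assoc, ← Nat.cast_mul, h]
        push_cast
        ring
    _ = if l = m then (-1) ^ m else 0 := by
        rw [Int.alternating_sum_range_choose]
        by_cases h : l = m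
        · simp [h]
        · simp [h, show m - l ≠ 0 by omega]

theorem sum_Icc_alternating_choose_mul_sum_choose {R : Type*} [CommRing R] {m : ℕ} (hm : 1 ≤ m)
    (u : ℕ → R) :
    ∑ k ∈ Icc 1 m, (-1) ^ k * (m.choose k : R) * ∑ l ∈ Icc 1 k, (k.choose l : R) * u l =
      (-1) ^ m * u m := by
  simp_rw [mul_sum]
  rw [sum_comm' (t' := Icc 1 m) (s' := fun l => Icc l m) (fun k l => by simp only [mem_Icc]; omega)]
  calc _ = ∑ l ∈ Icc 1 m,
        ((∑ k ∈ Icc l m, (-1 : ℤ) ^ k * m.choose k * k.choose l : ℤ) : R) * u l := by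
        refine sum_congr rfl fun l _ => ?_
        push_cast
        rw [sum_mul]
        exact sum_congr rfl fun k _ => by ring
    _ = (-1) ^ m * u m := by
        simp_rw [alternating_sum_Icc_choose_mul_choose]
        simp [hm]

theorem closed_form_rearrange {R : Type*} [Field R] {m : ℕ} (hm : 1 ≤ m) (a : R) (Z P : ℕ → R) :
    1 / ((m : R) + 1) * a ^ (m + 2) - Z 2 * a ^ m
        - ∑ k ∈ Icc 1 m, (m.choose k : R) * (-1) ^ (k + 1) *
            ((∑ l ∈ Icc 1 k, (l ! : R) * (k.choose l : R) * a ^ (m - l) * P l)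
              - (k ! : R) * a ^ (m - k) * Z (k + 2)) =
      a ^ (m + 2) / (m + 1)
        - ∑ k ∈ range (m + 1), (-1) ^ k * (m.descFactorial k : R) * a ^ (m - k) * Z (k + 2)
        + (-1) ^ m * m ! * P m := by
  have hP := sum_Icc_alternating_choose_mul_sum_choose hm fun l => (l ! : R) * a ^ (m - l) * P l
  have hZ : ∑ k ∈ range (m + 1), (-1) ^ k * (m.descFactorial k : R) * a ^ (m - k) * Z (k + 2) =
      Z 2 * a ^ m +
        ∑ k ∈ Icc 1 m, (-1) ^ k * (m.choose k : R) * ((k ! : R) * a ^ (m - k) * Z (k + 2)) := by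
    rw [range_eq_Ico, sum_eq_sum_Ico_succ_bot (by omega), Ico_add_one_right_eq_Icc]
    simp only [Nat.descFactorial_eq_factorial_mul_choose, Nat.cast_mul]
    congr 1
    · simp [mul_comm]
    · exact sum_congr rfl fun k _ => by ring
  have hsplit : ∑ k ∈ Icc 1 m, (m.choose k : R) * (-1) ^ (k + 1) *
        ((∑ l ∈ Icc 1 k, (l ! : R) * (k.choose l : R) * a ^ (m - l) * P l)
          - (k ! : R) * a ^ (m - k) * Z (k + 2)) =
      - ∑ k ∈ Icc 1 m, (-1) ^ k * (m.choose k : R) *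
          ∑ l ∈ Icc 1 k, (k.choose l : R) * ((l ! : R) * a ^ (m - l) * P l)
      + ∑ k ∈ Icc 1 m, (-1) ^ k * (m.choose k : R) * ((k ! : R) * a ^ (m - k) * Z (k + 2)) := by
    rw [← sum_neg_distrib, ← sum_add_distrib]
    refine sum_congr rfl fun k _ => ?_
    rw [sum_congr rfl fun l _ => show (l ! : R) * k.choose l * a ^ (m - l) * P l =
      k.choose l * (l ! * a ^ (m - l) * P l) by ring]
    ring
  rw [hsplit, hP, hZ, Nat.sub_self, pow_zero]
  ring

end

theorem stmt2 (m : ℕ) (hm : 1 ≤ m) :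
    ∫ t in (0:ℝ)..1, Real.log (1 + t) ^ m * Real.log (1 - t) / (1 + t) =
      (1 / ((m : ℝ) + 1)) * Real.log 2 ^ (m + 2) - rzeta 2 * Real.log 2 ^ m
        - ∑ k ∈ Finset.Icc 1 m, (m.choose k : ℝ) * (-1) ^ (k + 1) *
            ((∑ l ∈ Finset.Icc 1 k, (l.factorial : ℝ) * (k.choose l : ℝ) *
                Real.log 2 ^ (m - l) * polylog (l + 2) (1 / 2))
              - (k.factorial : ℝ) * Real.log 2 ^ (m - k) * rzeta (k + 2)) := by
  rw [integral_log_one_add_pow_mul_log_one_sub_div_eq, integral_log_pow_mul_log_two_sub_div,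
    closed_form_rearrange hm]
end

section
/- For every integer m ≥ 1 and every x ∈ [0,1], ∫₀ˣ (ln(1+t))^m / t dt = (1/(m+1))·(ln(1+x))^{m+1} + m!·( ζ(m+1) - Li_{m+1}(1/(1+x)) ) - m!·Σ_{j=1}^{m} ( (ln(1+x))^{m-j+1} / (m-j+1)! )·Li_j(1/(1+x)). -/
open scoped BigOperators Classical

open Filter Set Topology

lemma summable_polylog (s : ℕ) {y : ℝ} (h : |y| < 1) :
    Summable (fun n : ℕ => y ^ (n + 1) / ((n : ℝ) + 1) ^ s) := by
  apply Summable.of_norm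
  have hg : Summable (fun n : ℕ => |y| ^ (n + 1)) := by
    simpa [pow_succ'] using (summable_geometric_of_lt_one (abs_nonneg y) h).mul_left |y|
  refine hg.of_nonneg_of_le (fun n => norm_nonneg _) (fun n => ?_)
  have h1 : (1:ℝ) ≤ ((n:ℝ)+1)^s := one_le_pow₀ (by simp)
  rw [Real.norm_eq_abs, abs_div, abs_pow, abs_of_nonneg (by positivity : (0:ℝ) ≤ ((n:ℝ)+1)^s)]
  exact div_le_self (by positivity) h1

lemma hasDerivAt_polylog (s : ℕ) (hs : 1 ≤ s) {y : ℝ} (h : |y| < 1) (hy : y ≠ 0) :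
    HasDerivAt (polylog s) (polylog (s-1) y / y) y := by
  set r : ℝ := (1 + |y|) / 2 with hr
  have hr0 : 0 ≤ r := by positivity
  have hyr : |y| < r := by rw [hr]; linarith
  have hr1 : r < 1 := by rw [hr]; linarith
  have key : HasDerivAt (polylog s) (∑' n : ℕ, y ^ n / ((n:ℝ)+1) ^ (s-1)) y := by
    apply hasDerivAt_of_tendstoUniformlyOn (Metric.isOpen_ball (x := (0:ℝ)) (ε := r))
      (f := fun N z => ∑ n ∈ Finset.range N, z ^ (n+1) / ((n:ℝ)+1) ^ s)
      (f' := fun N z => ∑ n ∈ Finset.range N, z ^ n / ((n:ℝ)+1) ^ (s-1))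
      (g := polylog s) (g' := fun z => ∑' n : ℕ, z ^ n / ((n:ℝ)+1) ^ (s-1)) (l := Filter.atTop)
    · apply tendstoUniformlyOn_tsum_nat (u := fun n => r ^ n)
        (summable_geometric_of_lt_one hr0 hr1)
      intro n z hz
      rw [Real.norm_eq_abs, abs_div, abs_pow, abs_of_nonneg (by positivity : (0:ℝ) ≤ ((n:ℝ)+1)^(s-1))]
      calc |z| ^ n / ((n:ℝ)+1) ^ (s-1) ≤ |z| ^ n := div_le_self (by positivity) (one_le_pow₀ (by simp))
        _ ≤ r ^ n := pow_le_pow_left₀ (abs_nonneg z) (le_of_lt (by simpa [Real.dist_eq] using hz)) n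
    · filter_upwards with N z _
      apply HasDerivAt.fun_sum
      intro n _
      have h3 : HasDerivAt (fun z : ℝ => z ^ (n+1) / ((n:ℝ)+1) ^ s)
          ((n+1 : ℝ) * z ^ n / ((n:ℝ)+1) ^ s) z := by
        have := (hasDerivAt_pow (n+1) z).div_const (((n:ℝ)+1) ^ s)
        simpa using this
      refine h3.congr_deriv (Eq.symm ?_)
      rw [eq_div_iff (by positivity), div_mul_eq_mul_div, div_eq_iff (by positivity)]
      have : ((n:ℝ)+1) ^ s = ((n:ℝ)+1) ^ (s-1) * ((n:ℝ)+1) := by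
        rw [← pow_succ]; congr 1; omega
      rw [this]; ring
    · intro z hz
      have := (summable_polylog s (by simpa [Real.dist_eq] using hz.trans hr1)).hasSum
      exact this.tendsto_sum_nat
    · simpa [Real.dist_eq] using hyr.trans_le (le_refl r) |>.trans_le (le_refl r)
  convert key using 1
  have h2 : polylog (s-1) y = y * ∑' n : ℕ, y ^ n / ((n:ℝ)+1) ^ (s-1) := by
    rw [← tsum_mul_left]
    exact tsum_congr fun n => by rw [← mul_div_assoc, ← pow_succ']
  rw [h2]
  field_simp

lemma polylog_one_eq {y : ℝ} (h : |y| < 1) : polylog 1 y = -Real.log (1 - y) := by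
  have := Real.hasSum_pow_div_log_of_abs_lt_one h
  rw [polylog, ← this.tsum_eq]
  exact tsum_congr fun n => by push_cast; rw [pow_one]

lemma polylog_zero_eq {y : ℝ} (h0 : 0 ≤ y) (h1 : y < 1) : polylog 0 y = y / (1 - y) := by
  have : polylog 0 y = y * ∑' n : ℕ, y ^ n := by
    rw [polylog, ← tsum_mul_left]
    exact tsum_congr fun n => by rw [pow_zero, div_one, ← pow_succ']
  rw [this, tsum_geometric_of_lt_one h0 h1, div_eq_mul_inv]

lemma polylog_at_one (s : ℕ) : polylog s 1 = rzeta s := by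
  unfold polylog rzeta; exact tsum_congr fun n => by rw [one_pow]

lemma summable_zeta {s : ℕ} (hs : 2 ≤ s) : Summable (fun n : ℕ => 1 / ((n : ℝ) + 1) ^ s) := by
  have := (Real.summable_one_div_nat_pow (p := s)).2 (by omega)
  have := (summable_nat_add_iff (f := fun n : ℕ => 1 / (n : ℝ) ^ s) 1).2 this
  simpa using this

lemma continuous_polylog_clamp {s : ℕ} (hs : 2 ≤ s) :
    Continuous (fun z : ℝ => ∑' n : ℕ, (max (-1) (min 1 z)) ^ (n + 1) / ((n : ℝ) + 1) ^ s) := by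
  apply continuous_tsum (u := fun n : ℕ => 1 / ((n : ℝ) + 1) ^ s)
  · intro n
    exact (continuous_const.max (continuous_const.min continuous_id)).pow (n+1) |>.div_const _
  · exact summable_zeta hs
  · intro n z
    have hc : |max (-1) (min 1 z)| ≤ 1 := abs_le.2 ⟨le_max_left _ _, max_le (by norm_num) (min_le_left _ _)⟩
    rw [Real.norm_eq_abs, abs_div, abs_pow, abs_of_nonneg (by positivity : (0:ℝ) ≤ ((n:ℝ)+1)^s)]
    gcongr
    exact pow_le_one₀ (abs_nonneg _) hc

lemma clamp_eq {y : ℝ} (h0 : 0 ≤ y) (h1 : y ≤ 1) : max (-1 : ℝ) (min 1 y) = y := by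
  rw [min_eq_right h1, max_eq_right (by linarith)]

lemma tendsto_polylog_one {s : ℕ} (hs : 2 ≤ s) {x : ℝ} (hx : 0 < x) :
    Tendsto (fun a : ℝ => polylog s (1/(1+a))) (𝓝[Ioo (0:ℝ) x] 0) (𝓝 (rzeta s)) := by
  set G : ℝ → ℝ := fun z => ∑' n : ℕ, (max (-1) (min 1 z)) ^ (n + 1) / ((n : ℝ) + 1) ^ s with hGdef
  have hG : Continuous G := continuous_polylog_clamp hs
  have h1 : Tendsto (fun a : ℝ => (1:ℝ)/(1+a)) (𝓝[Ioo (0:ℝ) x] 0) (𝓝 1) := by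
    have : Tendsto (fun a : ℝ => (1:ℝ)/(1+a)) (𝓝 0) (𝓝 ((1:ℝ)/(1+0))) :=
      (continuousAt_const.div (continuousAt_const.add continuousAt_id) (by norm_num)).tendsto
    simpa using this.mono_left nhdsWithin_le_nhds
  have h2 : Tendsto (fun a : ℝ => G (1/(1+a))) (𝓝[Ioo (0:ℝ) x] 0) (𝓝 (G 1)) :=
    (hG.continuousAt.tendsto).comp h1
  have hG1 : G 1 = rzeta s := by
    rw [hGdef]
    simp only [clamp_eq zero_le_one le_rfl, one_pow]
    rfl
  rw [hG1] at h2
  apply h2.congr'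
  filter_upwards [self_mem_nhdsWithin] with a ha
  have ha0 : 0 < a := ha.1
  have : max (-1:ℝ) (min 1 (1/(1+a))) = 1/(1+a) :=
    clamp_eq (by positivity) (by rw [div_le_one (by linarith)]; linarith)
  rw [hGdef]; simp only [this]; rfl

lemma tendsto_log_term {x : ℝ} (hx : 0 < x) (hx1 : x ≤ 1) (k : ℕ) (hk : 1 ≤ k) :
    Tendsto (fun a : ℝ => Real.log (1+a) ^ k * polylog 1 (1/(1+a)))
      (𝓝[Ioo (0:ℝ) x] 0) (𝓝 0) := by
  have key : ∀ a ∈ Ioo (0:ℝ) x,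
      Real.log (1+a) ^ k * polylog 1 (1/(1+a)) = Real.log (1+a) ^ k * (Real.log (1+a) - Real.log a) := by
    intro a ha
    have ha0 : 0 < a := ha.1
    have hy1 : (1:ℝ)/(1+a) < 1 := by rw [div_lt_one (by linarith)]; linarith
    have habs : |(1:ℝ)/(1+a)| < 1 := by rw [abs_of_pos (by positivity)]; exact hy1
    rw [polylog_one_eq habs]
    have : (1:ℝ) - 1/(1+a) = a/(1+a) := by field_simp; ring
    rw [this, Real.log_div (ne_of_gt ha0) (by linarith)]
    ring
  -- squeeze
  have hub : ∀ a ∈ Ioo (0:ℝ) x,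
      Real.log (1+a) ^ k * (Real.log (1+a) - Real.log a) ≤ a^2 + 2 * Real.sqrt a := by
    intro a ha
    have ha0 : 0 < a := ha.1
    have ha1 : a ≤ 1 := le_of_lt (lt_of_lt_of_le ha.2 hx1)
    have hL0 : 0 ≤ Real.log (1+a) := Real.log_nonneg (by linarith)
    have hLa : Real.log (1+a) ≤ a := by
      have := Real.log_le_sub_one_of_pos (x := 1+a) (by linarith)
      linarith
    have hloga : Real.log a ≤ 0 := Real.log_nonpos (le_of_lt ha0) ha1
    have hnl : -Real.log a ≤ 2 / Real.sqrt a := by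
      have hs0 : 0 < Real.sqrt a := Real.sqrt_pos.2 ha0
      have h1 : Real.log (Real.sqrt a)⁻¹ ≤ (Real.sqrt a)⁻¹ - 1 :=
        Real.log_le_sub_one_of_pos (by positivity)
      have h2 : Real.log (Real.sqrt a)⁻¹ = -(Real.log a / 2) := by
        rw [Real.log_inv, Real.log_sqrt (le_of_lt ha0)]
      rw [h2] at h1
      have h4 : (2:ℝ) / Real.sqrt a = 2 * (Real.sqrt a)⁻¹ := by rw [div_eq_mul_inv]
      linarith
    have hLk : Real.log (1+a) ^ k ≤ a := by
      calc Real.log (1+a) ^ k ≤ a ^ k := pow_le_pow_left₀ hL0 hLa k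
        _ ≤ a ^ 1 := pow_le_pow_of_le_one (le_of_lt ha0) ha1 hk
        _ = a := pow_one a
    have hsum : Real.log (1+a) - Real.log a ≤ a + 2 / Real.sqrt a := by linarith
    have hpos : 0 ≤ Real.log (1+a) - Real.log a := by linarith
    calc Real.log (1+a) ^ k * (Real.log (1+a) - Real.log a)
        ≤ a * (a + 2 / Real.sqrt a) := by
          apply mul_le_mul hLk hsum hpos (le_of_lt ha0)
      _ = a^2 + 2 * (a / Real.sqrt a) := by ring
      _ = a^2 + 2 * Real.sqrt a := by rw [Real.div_sqrt]
  have hlb : ∀ a ∈ Ioo (0:ℝ) x, 0 ≤ Real.log (1+a) ^ k * (Real.log (1+a) - Real.log a) := by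
    intro a ha
    have ha0 : 0 < a := ha.1
    have ha1 : a ≤ 1 := le_of_lt (lt_of_lt_of_le ha.2 hx1)
    have hL0 : 0 ≤ Real.log (1+a) := Real.log_nonneg (by linarith)
    have hloga : Real.log a ≤ 0 := Real.log_nonpos (le_of_lt ha0) ha1
    have := pow_nonneg hL0 k
    nlinarith
  have hbound : Tendsto (fun a : ℝ => a^2 + 2 * Real.sqrt a) (𝓝[Ioo (0:ℝ) x] 0) (𝓝 0) := by
    have : Tendsto (fun a : ℝ => a^2 + 2 * Real.sqrt a) (𝓝 0) (𝓝 ((0:ℝ)^2 + 2 * Real.sqrt 0)) := by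
      exact ((continuous_pow 2).tendsto 0).add ((Real.continuous_sqrt.tendsto 0).const_mul 2)
    simpa using this.mono_left nhdsWithin_le_nhds
  have hmain : Tendsto (fun a : ℝ => Real.log (1+a) ^ k * (Real.log (1+a) - Real.log a))
      (𝓝[Ioo (0:ℝ) x] 0) (𝓝 0) := by
    apply squeeze_zero' ?_ ?_ hbound
    · filter_upwards [self_mem_nhdsWithin] with a ha using hlb a ha
    · filter_upwards [self_mem_nhdsWithin] with a ha using hub a ha
  apply hmain.congr'
  filter_upwards [self_mem_nhdsWithin] with a ha
  exact (key a ha).symm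

lemma hasDerivAt_polylog_comp (s : ℕ) (hs : 1 ≤ s) {t : ℝ} (ht : 0 < t) :
    HasDerivAt (fun u : ℝ => polylog s (1/(1+u))) (-polylog (s-1) (1/(1+t)) / (1+t)) t := by
  have h1t : (0:ℝ) < 1 + t := by linarith
  have hinner : HasDerivAt (fun u : ℝ => 1/(1+u)) (-(1/(1+t)^2)) t := by
    have h := ((hasDerivAt_id t).const_add (1:ℝ)).inv (ne_of_gt h1t)
    simpa [one_div, neg_div, Pi.inv_def] using h
  have habs : |1/(1+t)| < 1 := by
    rw [abs_of_pos (by positivity)]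
    rw [div_lt_one h1t]; linarith
  have hne : (1:ℝ)/(1+t) ≠ 0 := by positivity
  have houter := hasDerivAt_polylog s hs habs hne
  have hcomp := houter.comp t hinner
  refine hcomp.congr_deriv (Eq.symm ?_)
  field_simp

lemma hasDerivAt_F (m : ℕ) (hm : 1 ≤ m) {t : ℝ} (ht : 0 < t) :
    HasDerivAt (fun u : ℝ =>
      (1 / ((m : ℝ) + 1)) * Real.log (1 + u) ^ (m + 1)
        + (m.factorial : ℝ) * (rzeta (m + 1) - polylog (m + 1) (1 / (1 + u)))
        - (m.factorial : ℝ) * ∑ j ∈ Finset.Icc 1 m,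
            Real.log (1 + u) ^ (m - j + 1) / ((m - j + 1).factorial : ℝ) *
              polylog j (1 / (1 + u)))
      (Real.log (1 + t) ^ m / t) t := by
  have h1t : (0:ℝ) < 1 + t := by linarith
  set L : ℝ := Real.log (1 + t) with hL
  set y : ℝ := 1/(1+t) with hy
  set P : ℕ → ℝ := fun j => polylog j y with hP
  set c : ℕ → ℝ := fun j => L ^ (m - j) / (((m - j).factorial : ℝ)) * P j with hc
  have hlog : HasDerivAt (fun u : ℝ => Real.log (1 + u)) (1/(1+t)) t := by
    have h := (Real.hasDerivAt_log (ne_of_gt h1t)).comp t ((hasDerivAt_id t).const_add (1:ℝ))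
    simpa [one_div, Function.comp_def] using h
  -- A
  have hA : HasDerivAt (fun u : ℝ => (1 / ((m : ℝ) + 1)) * Real.log (1 + u) ^ (m + 1))
      ((1 / ((m : ℝ) + 1)) * (((m:ℝ) + 1) * L ^ m * (1/(1+t)))) t := by
    have := (hlog.pow (m+1)).const_mul (1 / ((m : ℝ) + 1))
    simpa using this
  -- B
  have hB : HasDerivAt (fun u : ℝ =>
      (m.factorial : ℝ) * (rzeta (m + 1) - polylog (m + 1) (1 / (1 + u))))
      ((m.factorial : ℝ) * (-(-P m / (1 + t)))) t := by
    have hp := hasDerivAt_polylog_comp (m+1) (by omega) ht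
    have : (m+1) - 1 = m := by omega
    rw [this] at hp
    exact (hp.const_sub (rzeta (m+1))).const_mul _
  -- sum
  have hS : HasDerivAt (fun u : ℝ => ∑ j ∈ Finset.Icc 1 m,
        Real.log (1 + u) ^ (m - j + 1) / ((m - j + 1).factorial : ℝ) * polylog j (1 / (1 + u)))
      (∑ j ∈ Finset.Icc 1 m, (c j - c (j-1)) / (1 + t)) t := by
    apply HasDerivAt.fun_sum
    intro j hj
    obtain ⟨hj1, hjm⟩ := Finset.mem_Icc.1 hj
    have hder := ((hlog.pow (m - j + 1)).div_const (((m - j + 1).factorial : ℝ))).mul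
      (hasDerivAt_polylog_comp j hj1 ht)
    refine hder.congr_deriv (Eq.symm ?_)
    have hidx : m - j + 1 - 1 = m - j := by omega
    have hidx2 : m - (j-1) = m - j + 1 := by omega
    rw [hidx]
    simp only [hc, hP, hidx2]
    generalize m - j = n
    have hfne : ((n.factorial : ℝ)) ≠ 0 := Nat.cast_ne_zero.2 (Nat.factorial_ne_zero _)
    have hfac : (((n+1).factorial : ℝ)) = ((n : ℝ) + 1) * ((n.factorial : ℝ)) := by
      rw [Nat.factorial_succ]; push_cast; ring
    have hcast : ((n + 1 : ℕ) : ℝ) = (n : ℝ) + 1 := by push_cast; ring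
    rw [hfac, hcast]
    have h1 : ((n:ℝ)+1) ≠ 0 := by positivity
    simp only [Pi.pow_apply, hL, hy]
    field_simp
    ring
  have htele : (∑ j ∈ Finset.Icc 1 m, (c j - c (j-1)) / (1 + t)) = (c m - c 0) / (1+t) := by
    rw [← Finset.sum_div]
    congr 1
    rw [← Finset.Ico_add_one_right_eq_Icc, Finset.sum_Ico_eq_sum_range]
    have : ∀ i ∈ Finset.range (m + 1 - 1), c (1+i) - c (1+i-1) = c (i+1) - c i := by
      intro i _
      rw [show 1+i-1 = i from by omega, show 1+i = i+1 from by omega]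
    rw [Finset.sum_congr rfl this, show m + 1 - 1 = m from by omega, Finset.sum_range_sub c m]
  have htotal := (hA.add hB).sub (hS.const_mul (m.factorial : ℝ))
  refine htotal.congr_deriv (Eq.symm ?_)
  rw [htele]
  have hcm : c m = P m := by simp [hc, Nat.sub_self]
  have hc0 : c 0 = L ^ m / ((m.factorial : ℝ)) * P 0 := by simp [hc]
  have hP0 : P 0 = 1 / t := by
    have hy1 : y < 1 := by rw [hy, div_lt_one h1t]; linarith
    have hy0 : 0 ≤ y := by positivity
    rw [hP]; simp only []
    rw [polylog_zero_eq hy0 hy1, hy]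
    rw [show (1:ℝ) - 1/(1+t) = t/(1+t) from by field_simp; ring]
    rw [div_div_div_eq]
    field_simp
  have hfne : ((m.factorial : ℝ)) ≠ 0 := Nat.cast_ne_zero.2 (Nat.factorial_ne_zero _)
  rw [hcm, hc0, hP0]
  have hm1 : ((m:ℝ) + 1) ≠ 0 := by positivity
  field_simp
  ring

theorem stmt3 (m : ℕ) (hm : 1 ≤ m) (x : ℝ) (hx0 : 0 ≤ x) (hx1 : x ≤ 1) :
    ∫ t in (0:ℝ)..x, Real.log (1 + t) ^ m / t =
      (1 / ((m : ℝ) + 1)) * Real.log (1 + x) ^ (m + 1)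
        + (m.factorial : ℝ) * (rzeta (m + 1) - polylog (m + 1) (1 / (1 + x)))
        - (m.factorial : ℝ) * ∑ j ∈ Finset.Icc 1 m,
            Real.log (1 + x) ^ (m - j + 1) / ((m - j + 1).factorial : ℝ) *
              polylog j (1 / (1 + x)) := by
  rcases hx0.eq_or_lt with h | hx0'
  · -- x = 0
    subst h
    simp [polylog_at_one]
  set f : ℝ → ℝ := fun t => Real.log (1 + t) ^ m / t with hf
  set F : ℝ → ℝ := fun u =>
      (1 / ((m : ℝ) + 1)) * Real.log (1 + u) ^ (m + 1)
        + (m.factorial : ℝ) * (rzeta (m + 1) - polylog (m + 1) (1 / (1 + u)))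
        - (m.factorial : ℝ) * ∑ j ∈ Finset.Icc 1 m,
            Real.log (1 + u) ^ (m - j + 1) / ((m - j + 1).factorial : ℝ) *
              polylog j (1 / (1 + u)) with hFdef
  have hbound : ∀ t : ℝ, 0 < t → t ≤ 1 → ‖f t‖ ≤ 1 := by
    intro t ht ht1
    have hL0 : 0 ≤ Real.log (1 + t) := Real.log_nonneg (by linarith)
    have hLa : Real.log (1 + t) ≤ t := by
      have := Real.log_le_sub_one_of_pos (x := 1 + t) (by linarith)
      linarith
    rw [hf]
    simp only [Real.norm_eq_abs]
    rw [abs_of_nonneg (by positivity)]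
    rw [div_le_one ht]
    calc Real.log (1 + t) ^ m ≤ t ^ m := pow_le_pow_left₀ hL0 hLa m
      _ ≤ t ^ 1 := pow_le_pow_of_le_one (le_of_lt ht) ht1 hm
      _ = t := pow_one t
  have hInt : IntervalIntegrable f MeasureTheory.volume 0 x := by
    rw [intervalIntegrable_iff_integrableOn_Ioc_of_le hx0]
    have hmeas : Measurable f := by
      apply Measurable.div
      · exact (Real.measurable_log.comp (measurable_const.add measurable_id)).pow_const m
      · exact measurable_id
    apply MeasureTheory.Integrable.mono'
      ((MeasureTheory.integrableOn_const_iff (C := (1:ℝ))).2 (Or.inr measure_Ioc_lt_top)) hmeas.aestronglyMeasurable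
    rw [MeasureTheory.ae_restrict_iff' measurableSet_Ioc]
    filter_upwards with t ht
    exact hbound t ht.1 (ht.2.trans hx1)
  set l : Filter ℝ := 𝓝[Ioo (0:ℝ) x] 0 with hl
  haveI : l.NeBot := left_nhdsWithin_Ioo_neBot hx0'
  have hFTC : ∀ a ∈ Ioo (0:ℝ) x, ∫ t in a..x, f t = F x - F a := by
    intro a ha
    apply intervalIntegral.integral_eq_sub_of_hasDerivAt
    · intro t htx
      rw [uIcc_of_le (le_of_lt ha.2)] at htx
      exact hasDerivAt_F m hm (lt_of_lt_of_le ha.1 htx.1)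
    · apply hInt.mono_set
      rw [uIcc_of_le (le_of_lt ha.2), uIcc_of_le hx0]
      exact Icc_subset_Icc (le_of_lt ha.1) le_rfl
  have hsmall : Tendsto (fun a : ℝ => ∫ t in (0:ℝ)..a, f t) l (𝓝 0) := by
    apply squeeze_zero_norm'
    · filter_upwards [self_mem_nhdsWithin] with a (ha : a ∈ Ioo (0:ℝ) x)
      have := intervalIntegral.norm_integral_le_of_norm_le_const
        (f := f) (a := (0:ℝ)) (b := a) (C := 1) ?_
      · simpa using this
      · intro t ht
        rw [uIoc_of_le (le_of_lt ha.1)] at ht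
        exact hbound t ht.1 (le_trans ht.2 (le_trans (le_of_lt ha.2) hx1))
    · have : Tendsto (fun a : ℝ => |a|) (𝓝 0) (𝓝 |0|) := continuous_abs.tendsto 0
      simpa using this.mono_left nhdsWithin_le_nhds
  have hT1 : Tendsto (fun a : ℝ => ∫ t in a..x, f t) l (𝓝 (∫ t in (0:ℝ)..x, f t)) := by
    have h1 : Tendsto (fun a : ℝ => (∫ t in (0:ℝ)..x, f t) - ∫ t in (0:ℝ)..a, f t) l
        (𝓝 ((∫ t in (0:ℝ)..x, f t) - 0)) := tendsto_const_nhds.sub hsmall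
    rw [sub_zero] at h1
    apply h1.congr'
    filter_upwards [self_mem_nhdsWithin] with a (ha : a ∈ Ioo (0:ℝ) x)
    apply intervalIntegral.integral_interval_sub_left hInt
    apply hInt.mono_set
    rw [uIcc_of_le (le_of_lt ha.1), uIcc_of_le hx0]
    exact Icc_subset_Icc le_rfl (le_of_lt ha.2)
  have hF0 : Tendsto F l (𝓝 0) := by
    have hA0 : Tendsto (fun a : ℝ => (1 / ((m : ℝ) + 1)) * Real.log (1 + a) ^ (m + 1)) l (𝓝 0) := by
      have hlog : Tendsto (fun a : ℝ => Real.log (1 + a)) (𝓝 0) (𝓝 0) := by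
        have h1 : ContinuousAt (fun a : ℝ => Real.log (1 + a)) 0 :=
          (Real.continuousAt_log (by norm_num)).comp (continuousAt_const.add continuousAt_id)
        have := h1.tendsto
        simpa using this
      have := ((hlog.pow (m+1)).const_mul (1 / ((m : ℝ) + 1))).mono_left
        (nhdsWithin_le_nhds (s := Ioo (0:ℝ) x))
      simpa using this
    have hB0 : Tendsto (fun a : ℝ => (m.factorial : ℝ) *
        (rzeta (m + 1) - polylog (m + 1) (1 / (1 + a)))) l (𝓝 0) := by
      have h1 := tendsto_polylog_one (s := m+1) (by omega) hx0'
      have h2 : Tendsto (fun a : ℝ => rzeta (m+1) - polylog (m + 1) (1 / (1 + a)))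
          (𝓝[Ioo (0:ℝ) x] 0) (𝓝 (rzeta (m+1) - rzeta (m+1))) :=
        Tendsto.sub tendsto_const_nhds h1
      have := h2.const_mul (m.factorial : ℝ)
      simpa using this
    have hC0 : Tendsto (fun a : ℝ => (m.factorial : ℝ) * ∑ j ∈ Finset.Icc 1 m,
        Real.log (1 + a) ^ (m - j + 1) / ((m - j + 1).factorial : ℝ) *
          polylog j (1 / (1 + a))) l (𝓝 0) := by
      have hsum : Tendsto (fun a : ℝ => ∑ j ∈ Finset.Icc 1 m,
          Real.log (1 + a) ^ (m - j + 1) / ((m - j + 1).factorial : ℝ) *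
            polylog j (1 / (1 + a))) l (𝓝 (∑ j ∈ Finset.Icc 1 m, (0:ℝ))) := by
        apply tendsto_finset_sum
        intro j hj
        obtain ⟨hj1, hjm⟩ := Finset.mem_Icc.1 hj
        by_cases hj2 : j = 1
        · subst hj2
          have hmm : m - 1 + 1 = m := by omega
          rw [hmm]
          have := (tendsto_log_term hx0' hx1 m hm).div_const ((m.factorial : ℝ))
          rw [zero_div] at this
          apply this.congr
          intro a
          ring
        · have hj2' : 2 ≤ j := by omega
          have hlog : Tendsto (fun a : ℝ => Real.log (1 + a) ^ (m - j + 1) /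
              ((m - j + 1).factorial : ℝ)) l (𝓝 0) := by
            have hlog0 : Tendsto (fun a : ℝ => Real.log (1 + a)) (𝓝 0) (𝓝 0) := by
              have h1 : ContinuousAt (fun a : ℝ => Real.log (1 + a)) 0 :=
                (Real.continuousAt_log (by norm_num)).comp (continuousAt_const.add continuousAt_id)
              simpa using h1.tendsto
            have := ((hlog0.pow (m - j + 1)).div_const (((m - j + 1).factorial : ℝ))).mono_left
              (nhdsWithin_le_nhds (s := Ioo (0:ℝ) x))
            simpa [zero_pow (Nat.succ_ne_zero (m - j))] using this
          have hLi := tendsto_polylog_one (s := j) hj2' hx0'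
          have := hlog.mul hLi
          simpa using this
      rw [Finset.sum_const, smul_zero] at hsum
      have := hsum.const_mul (m.factorial : ℝ)
      simpa using this
    have h3 := (hA0.add hB0).sub hC0
    simp only [add_zero, sub_zero] at h3
    exact h3
  have hT2 : Tendsto (fun a : ℝ => F x - F a) l (𝓝 (F x)) := by
    have h := (tendsto_const_nhds (x := F x) (f := l)).sub hF0
    simpa using h
  have hT2' : Tendsto (fun a : ℝ => ∫ t in a..x, f t) l (𝓝 (F x)) := by
    apply hT2.congr'
    filter_upwards [self_mem_nhdsWithin] with a (ha : a ∈ Ioo (0:ℝ) x)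
    exact (hFTC a ha).symm
  exact tendsto_nhds_unique hT1 hT2'
end

section
/- For every integer k ≥ 1 and every x ∈ (-1, 1), (ln(1+x))^k / (1 - x) = (-1)^k · k! · Σ_{n≥1} ζ_{n-1}(1̄, {1}_{k-1}) · x^{n-1}. -/
open scoped BigOperators Classical

noncomputable section Stmt9Aux

namespace Stmt9

/-- Coefficients of `(-log(1-y))^k / k!`. -/
def Qc : ℕ → ℕ → ℝ
  | 0, n => if n = 0 then 1 else 0
  | (k+1), n => (∑ j ∈ Finset.range n, Qc k j) / n

lemma Qc_succ (k n : ℕ) : Qc (k+1) n = (∑ j ∈ Finset.range n, Qc k j) / n := rfl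

lemma Qc_succ_zero (k : ℕ) : Qc (k+1) 0 = 0 := by simp [Qc_succ]

lemma Qc_nonneg : ∀ k n, 0 ≤ Qc k n := by
  intro k
  induction k with
  | zero => intro n; simp only [Qc]; split <;> norm_num
  | succ k ih =>
    intro n
    rw [Qc_succ]
    exact div_nonneg (Finset.sum_nonneg fun j _ => ih j) (Nat.cast_nonneg n)

lemma Qc_le_pow : ∀ k n, Qc k n ≤ (n : ℝ) ^ k := by
  intro k
  induction k with
  | zero => intro n; simp only [Qc, pow_zero]; split <;> norm_num
  | succ k ih =>
    intro n
    rcases Nat.eq_zero_or_pos n with rfl | hn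
    · simp [Qc_succ_zero]
    rw [Qc_succ]
    have h1 : (∑ j ∈ Finset.range n, Qc k j) ≤ (n : ℝ) * (n : ℝ) ^ k := by
      calc (∑ j ∈ Finset.range n, Qc k j) ≤ ∑ j ∈ Finset.range n, (n : ℝ) ^ k := by
            refine Finset.sum_le_sum fun j hj => (ih j).trans ?_
            exact pow_le_pow_left₀ (Nat.cast_nonneg j)
              (by exact_mod_cast (Finset.mem_range.mp hj).le) k
        _ = (n : ℝ) * (n : ℝ) ^ k := by rw [Finset.sum_const, Finset.card_range, nsmul_eq_mul]
    have hn' : (0:ℝ) < (n:ℝ) := by exact_mod_cast hn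
    calc (∑ j ∈ Finset.range n, Qc k j) / n ≤ ((n : ℝ) * (n : ℝ) ^ k) / n := by gcongr
      _ = (n : ℝ) ^ k := by field_simp
      _ ≤ (n : ℝ) ^ (k+1) := by
          exact pow_le_pow_right₀ (by exact_mod_cast hn) (Nat.le_succ k)

lemma mul_Qc (k m : ℕ) : (m : ℝ) * Qc (k+1) m = ∑ j ∈ Finset.range m, Qc k j := by
  rcases Nat.eq_zero_or_pos m with rfl | hm
  · simp
  · rw [Qc_succ, mul_div_cancel₀]
    exact_mod_cast hm.ne'

lemma swap_sum (f : ℕ → ℕ → ℝ) : ∀ n : ℕ,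
    ∑ a ∈ Finset.range (n+1), ∑ j ∈ Finset.range (n - a), f a j =
      ∑ m ∈ Finset.range n, ∑ a ∈ Finset.range (m+1), f a (m - a) := by
  intro n
  induction n with
  | zero => simp
  | succ n ih =>
    rw [Finset.sum_range_succ (fun a => ∑ j ∈ Finset.range (n+1-a), f a j)]
    have h1 : ∀ a ∈ Finset.range (n+1),
        ∑ j ∈ Finset.range (n+1-a), f a j
          = (∑ j ∈ Finset.range (n-a), f a j) + f a (n-a) := by
      intro a ha
      have : n + 1 - a = (n - a) + 1 := by
        have := Finset.mem_range.mp ha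
        omega
      rw [this, Finset.sum_range_succ]
    rw [Finset.sum_congr rfl h1, Finset.sum_add_distrib, ih]
    simp [Finset.sum_range_succ]

lemma QI : ∀ k n, (∑ a ∈ Finset.range (n+1), Qc k (n - a) / a) = ((k : ℝ) + 1) * Qc (k+1) n := by
  intro k
  induction k with
  | zero =>
    intro n
    rcases Nat.eq_zero_or_pos n with rfl | hn
    · simp [Qc]
    have h : ∀ a ∈ Finset.range (n+1), a ≠ n → Qc 0 (n - a) / (a:ℝ) = 0 := by
      intro a ha hne
      have : n - a ≠ 0 := by
        have := Finset.mem_range.mp ha; omega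
      simp [Qc, this]
    rw [Finset.sum_eq_single n h (by simp)]
    have h2 : Qc 1 n = 1 / n := by
      rw [Qc_succ]
      have : (∑ j ∈ Finset.range n, Qc 0 j) = 1 := by
        rw [Finset.sum_eq_single 0]
        · simp [Qc]
        · intro b _ hb; simp [Qc, hb]
        · intro h; exact absurd (Finset.mem_range.mpr hn) h
      rw [this]
    rw [Nat.sub_self, h2]
    norm_num [Qc]
  | succ k ih =>
    intro n
    rcases Nat.eq_zero_or_pos n with rfl | hn
    · simp [Qc_succ_zero]
    have hn' : ((n:ℝ)) ≠ 0 := by exact_mod_cast hn.ne'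
    apply mul_left_cancel₀ hn'
    have key : ∀ a ∈ Finset.range (n+1),
        (n:ℝ) * (Qc (k+1) (n - a) / a)
          = (a:ℝ) * (Qc (k+1) (n - a) / a)
            + (∑ j ∈ Finset.range (n - a), Qc k j) / a := by
      intro a ha
      have hale : a ≤ n := by have := Finset.mem_range.mp ha; omega
      have hcast : ((n - a : ℕ) : ℝ) = (n:ℝ) - a := Nat.cast_sub hale
      have : (n:ℝ) = (a:ℝ) + ((n - a : ℕ) : ℝ) := by rw [hcast]; ring
      rw [this, add_mul]
      congr 1
      rw [← mul_Qc k (n - a), mul_div_assoc]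
    rw [Finset.mul_sum, Finset.sum_congr rfl key, Finset.sum_add_distrib]
    have hS1 : (∑ a ∈ Finset.range (n+1), (a:ℝ) * (Qc (k+1) (n - a) / a))
        = ∑ j ∈ Finset.range n, Qc (k+1) j := by
      rw [Finset.sum_range_succ']
      have h0 : ((0:ℕ):ℝ) * (Qc (k+1) (n - 0) / (0:ℕ)) = 0 := by simp
      rw [h0, add_zero]
      have h1 : ∀ i ∈ Finset.range n,
          ((i+1:ℕ):ℝ) * (Qc (k+1) (n - (i+1)) / (i+1:ℕ)) = Qc (k+1) (n - 1 - i) := by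
        intro i _
        have hne : ((i+1:ℕ):ℝ) ≠ 0 := by positivity
        have : n - (i+1) = n - 1 - i := by omega
        rw [this, mul_comm, div_mul_eq_mul_div, mul_div_assoc, div_self hne, mul_one]
      rw [Finset.sum_congr rfl h1, Finset.sum_range_reflect]
    have hS2 : (∑ a ∈ Finset.range (n+1), (∑ j ∈ Finset.range (n - a), Qc k j) / a)
        = ((k:ℝ)+1) * ∑ m ∈ Finset.range n, Qc (k+1) m := by
      have hdiv : ∀ a, (∑ j ∈ Finset.range (n - a), Qc k j) / (a:ℝ)
          = ∑ j ∈ Finset.range (n - a), Qc k j / a := by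
        intro a; rw [Finset.sum_div]
      simp_rw [hdiv]
      rw [swap_sum (fun a j => Qc k j / a) n]
      have hih : ∀ m ∈ Finset.range n,
          (∑ a ∈ Finset.range (m+1), Qc k (m - a) / (a:ℝ)) = ((k:ℝ)+1) * Qc (k+1) m :=
        fun m _ => ih m
      rw [Finset.sum_congr rfl hih, ← Finset.mul_sum]
    rw [hS1, hS2, ← mul_Qc (k+1) n]
    push_cast
    ring

lemma Qc_summable_norm (k : ℕ) {y : ℝ} (hy : |y| < 1) :
    Summable fun n : ℕ => ‖Qc k n * y ^ n‖ := by
  have hs : Summable fun n : ℕ => (n : ℝ) ^ k * |y| ^ n :=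
    summable_pow_mul_geometric_of_norm_lt_one k (by rwa [Real.norm_eq_abs, abs_abs])
  refine hs.of_nonneg_of_le (fun n => norm_nonneg _) (fun n => ?_)
  rw [Real.norm_eq_abs, abs_mul, abs_pow, abs_of_nonneg (Qc_nonneg k n)]
  exact mul_le_mul_of_nonneg_right (Qc_le_pow k n) (pow_nonneg (abs_nonneg y) n)

lemma log_summable_norm {y : ℝ} (hy : |y| < 1) :
    Summable fun n : ℕ => ‖y ^ n / (n : ℝ)‖ := by
  have hs : Summable fun n : ℕ => |y| ^ n :=
    summable_geometric_of_lt_one (abs_nonneg y) hy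
  refine hs.of_nonneg_of_le (fun n => norm_nonneg _) (fun n => ?_)
  rw [Real.norm_eq_abs, abs_div, abs_pow, Nat.abs_cast]
  rcases Nat.eq_zero_or_pos n with rfl | hn
  · simp
  · exact div_le_self (pow_nonneg (abs_nonneg y) n) (by exact_mod_cast hn)

lemma tsum_log {y : ℝ} (hy : |y| < 1) :
    ∑' n : ℕ, y ^ n / (n : ℝ) = -Real.log (1 - y) := by
  rw [Summable.tsum_eq_zero_add (log_summable_norm hy).of_norm]
  have h0 : y ^ 0 / ((0:ℕ) : ℝ) = 0 := by simp
  rw [h0, zero_add]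
  have := (Real.hasSum_pow_div_log_of_abs_lt_one hy).tsum_eq
  rw [← this]
  apply tsum_congr
  intro n
  push_cast
  rfl

lemma tsumQ : ∀ k, ∀ {y : ℝ}, |y| < 1 →
    ∑' n : ℕ, Qc k n * y ^ n = (-Real.log (1 - y)) ^ k / (k.factorial : ℝ) := by
  intro k
  induction k with
  | zero =>
    intro y _
    rw [tsum_eq_single 0 (by intro b hb; simp [Qc, hb])]
    simp [Qc]
  | succ k ih =>
    intro y hy
    have hf := log_summable_norm hy
    have hg := Qc_summable_norm k hy
    have key := tsum_mul_tsum_eq_tsum_sum_range_of_summable_norm hf hg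
    rw [tsum_log hy, ih hy] at key
    have h2 : ∀ n : ℕ, (∑ a ∈ Finset.range (n+1), (y ^ a / (a:ℝ)) * (Qc k (n - a) * y ^ (n-a)))
        = ((k:ℝ)+1) * (Qc (k+1) n * y ^ n) := by
      intro n
      have : ∀ a ∈ Finset.range (n+1),
          (y ^ a / (a:ℝ)) * (Qc k (n - a) * y ^ (n-a)) = Qc k (n - a) / a * y ^ n := by
        intro a ha
        have hale : a ≤ n := by have := Finset.mem_range.mp ha; omega
        have : y ^ a * y ^ (n - a) = y ^ n := by
          rw [← pow_add]
          congr 1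
          omega
        field_simp
        rw [← this]
        ring
      rw [Finset.sum_congr rfl this, ← Finset.sum_mul, QI k n]
      ring
    rw [show (fun n : ℕ => ∑ a ∈ Finset.range (n+1), (y ^ a / (a:ℝ)) * (Qc k (n - a) * y ^ (n-a)))
        = fun n : ℕ => ((k:ℝ)+1) * (Qc (k+1) n * y ^ n) from funext h2] at key
    rw [tsum_mul_left] at key
    have hkne : ((k:ℝ)+1) ≠ 0 := by positivity
    have := key.symm
    rw [show (-Real.log (1-y)) * ((-Real.log (1-y))^k / (k.factorial : ℝ))
        = (-Real.log (1-y))^(k+1) / (k.factorial : ℝ) from by rw [pow_succ]; ring] at this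
    have hsolve : ∑' n : ℕ, Qc (k+1) n * y ^ n
        = (-Real.log (1-y))^(k+1) / (k.factorial : ℝ) / ((k:ℝ)+1) := by
      rw [eq_div_iff hkne, mul_comm]
      exact this
    rw [hsolve, Nat.factorial_succ, div_div]
    push_cast
    ring_nf
/-- The index type of `mhn`. -/
abbrev S (k n : ℕ) : Type :=
  {f : Fin k → ℕ // StrictAnti f ∧ (∀ i, 0 < f i) ∧ ∀ i, f i ≤ n}

instance Sfinite (k n : ℕ) : Finite (S k n) := by
  have hinj : Function.Injective
      (fun f : S k n => (fun i => (⟨f.1 i, Nat.lt_succ_of_le (f.2.2.2 i)⟩ : Fin (n+1)))) := by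
    intro f g h
    refine Subtype.ext (funext fun i => ?_)
    have := congrFun h i
    exact congrArg Fin.val this
  exact Finite.of_injective _ hinj

noncomputable instance Sfintype (k n : ℕ) : Fintype (S k n) := Fintype.ofFinite _

instance Sunique (n : ℕ) : Unique (S 0 n) where
  default := ⟨fun i => i.elim0, fun i => i.elim0, fun i => i.elim0, fun i => i.elim0⟩
  uniq := fun f => Subtype.ext (funext fun i => i.elim0)

/-- Peel off the largest element of a strictly decreasing tuple. -/
def equivS (k n : ℕ) : S (k+1) n ≃ Σ m : Fin n, S k m where
  toFun f :=
    ⟨⟨f.1 0 - 1, by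
        have h1 : 0 < f.1 0 := f.2.2.1 0
        have h2 : f.1 0 ≤ n := f.2.2.2 0
        omega⟩,
      ⟨fun i => f.1 i.succ,
        fun i j hij => f.2.1 (Fin.succ_lt_succ_iff.mpr hij),
        fun i => f.2.2.1 i.succ,
        fun i => by
          have : f.1 i.succ < f.1 0 := f.2.1 (Fin.succ_pos i)
          simp only []
          omega⟩⟩
  invFun p :=
    ⟨Fin.cons ((p.1 : ℕ) + 1) p.2.1, by
      refine ⟨?_, ?_, ?_⟩
      · intro a b hab
        rcases Fin.eq_zero_or_eq_succ b with rfl | ⟨b', rfl⟩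
        · exact absurd hab (Fin.not_lt_zero a)
        rcases Fin.eq_zero_or_eq_succ a with rfl | ⟨a', rfl⟩
        · rw [Fin.cons_zero, Fin.cons_succ]
          have h1 : p.2.1 b' ≤ (p.1 : ℕ) := p.2.2.2.2 b'
          omega
        · rw [Fin.cons_succ, Fin.cons_succ]
          exact p.2.2.1 (Fin.succ_lt_succ_iff.mp hab)
      · intro i
        rcases Fin.eq_zero_or_eq_succ i with rfl | ⟨i', rfl⟩
        · rw [Fin.cons_zero]; omega
        · rw [Fin.cons_succ]; exact p.2.2.2.1 i'
      · intro i
        rcases Fin.eq_zero_or_eq_succ i with rfl | ⟨i', rfl⟩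
        · rw [Fin.cons_zero]; exact p.1.2
        · rw [Fin.cons_succ]
          have h1 : p.2.1 i' ≤ (p.1 : ℕ) := p.2.2.2.2 i'
          have h2 : (p.1 : ℕ) < n := p.1.2
          omega⟩
  left_inv f := by
    refine Subtype.ext (funext fun i => ?_)
    rcases Fin.eq_zero_or_eq_succ i with rfl | ⟨i', rfl⟩
    · have h1 : 0 < f.1 0 := f.2.2.1 0
      simp only [Fin.cons_zero]
      omega
    · simp only [Fin.cons_succ]
  right_inv p := by
    rcases p with ⟨m, g⟩
    refine Sigma.ext (Fin.ext ?_) (heq_of_eq (Subtype.ext (funext fun i => ?_)))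
    · simp
    · simp only [Fin.cons_succ]

lemma sum_decomp (k n : ℕ) (u : ℕ → ℝ) :
    (∑ f : S (k+1) n, u (f.1 0) * ∏ i : Fin k, 1 / (f.1 i.succ : ℝ)) =
      ∑ m ∈ Finset.range n,
        u (m+1) * ∑ g : S k m, ∏ i : Fin k, 1 / (g.1 i : ℝ) := by
  rw [← Equiv.sum_comp (equivS k n).symm
      (fun f : S (k+1) n => u (f.1 0) * ∏ i : Fin k, 1 / (f.1 i.succ : ℝ))]
  have hterm : ∀ p : Σ m : Fin n, S k m,
      (fun f : S (k+1) n => u (f.1 0) * ∏ i : Fin k, 1 / (f.1 i.succ : ℝ))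
          ((equivS k n).symm p)
        = u ((p.1 : ℕ) + 1) * ∏ i : Fin k, 1 / (p.2.1 i : ℝ) := by
    intro p
    simp only [equivS, Equiv.coe_fn_symm_mk, Fin.cons_zero, Fin.cons_succ]
  rw [Finset.sum_congr rfl (fun p _ => hterm p)]
  rw [← Finset.univ_sigma_univ, Finset.sum_sigma]
  rw [← Fin.sum_univ_eq_sum_range
      (fun m => u (m+1) * ∑ g : S k m, ∏ i : Fin k, 1 / (g.1 i : ℝ)) n]
  refine Finset.sum_congr rfl fun m _ => ?_
  rw [Finset.mul_sum]

lemma sumS : ∀ k n, (∑ g : S k n, ∏ i : Fin k, 1 / (g.1 i : ℝ))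
    = ∑ m ∈ Finset.range (n+1), Qc k m := by
  intro k
  induction k with
  | zero =>
    intro n
    have h1 : (∑ g : S 0 n, ∏ i : Fin 0, 1 / (g.1 i : ℝ)) = 1 := by
      simp
    rw [h1]
    rw [Finset.sum_eq_single 0]
    · simp [Qc]
    · intro b _ hb; simp [Qc, hb]
    · intro h; exact absurd (Finset.mem_range.mpr n.succ_pos) h
  | succ k ih =>
    intro n
    have hprod : ∀ g : S (k+1) n,
        (∏ i : Fin (k+1), 1 / (g.1 i : ℝ))
          = (1 / (g.1 0 : ℝ)) * ∏ i : Fin k, 1 / (g.1 i.succ : ℝ) := by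
      intro g
      rw [Fin.prod_univ_succ]
    rw [Finset.sum_congr rfl (fun g _ => hprod g)]
    rw [sum_decomp k n (fun m => 1 / (m : ℝ))]
    have hterm : ∀ m ∈ Finset.range n,
        (1 / ((m+1 : ℕ) : ℝ)) * ∑ g : S k m, ∏ i : Fin k, 1 / (g.1 i : ℝ)
          = Qc (k+1) (m+1) := by
      intro m _
      rw [ih m, Qc_succ]
      push_cast
      ring
    rw [Finset.sum_congr rfl hterm, Finset.sum_range_succ']
    rw [Qc_succ_zero, add_zero]
lemma mhn_cons_eq (n : ℕ) (t : List ℤ) (ht : ∀ z ∈ t, z = 1) :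
    mhn n ((-1) :: t) = ∑ m ∈ Finset.range (n+1), (-1:ℝ)^m * Qc (t.length + 1) m := by
  have hsummand : ∀ f : S (t.length + 1) n,
      (∏ i : Fin (t.length + 1),
          (if ((-1) :: t).get i < 0 then (-1 : ℝ) else 1) ^ (f.1 i)
            / ((f.1 i : ℝ)) ^ (((-1) :: t).get i).natAbs)
        = ((-1:ℝ) ^ (f.1 0) / ((f.1 0 : ℕ) : ℝ)) * ∏ i : Fin t.length, 1 / ((f.1 i.succ : ℕ) : ℝ) := by
    intro f
    rw [Fin.prod_univ_succ]
    congr 1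
    · have h0 : ((-1) :: t).get (0 : Fin (t.length + 1)) = -1 := rfl
      rw [h0]
      norm_num
    · refine Finset.prod_congr rfl fun i _ => ?_
      have hget : ((-1) :: t).get i.succ = 1 := by
        have : ((-1) :: t).get i.succ = t.get i := List.get_cons_succ
        rw [this]
        exact ht _ (t.get_mem i)
      rw [hget]
      norm_num
  have step1 : mhn n ((-1) :: t)
      = ∑ f : S (t.length + 1) n,
          ((-1:ℝ) ^ (f.1 0) / ((f.1 0 : ℕ) : ℝ))
            * ∏ i : Fin t.length, 1 / ((f.1 i.succ : ℕ) : ℝ) := by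
    rw [mhn, tsum_fintype]
    exact Finset.sum_congr rfl (fun f _ => hsummand f)
  rw [step1]
  have step2 := sum_decomp t.length n (fun m : ℕ => (-1:ℝ)^m / (m : ℝ))
  rw [step2]
  have step3 : ∀ m ∈ Finset.range n,
      ((-1:ℝ)^(m+1) / ((m+1 : ℕ) : ℝ))
          * (∑ g : S t.length m, ∏ i : Fin t.length, 1 / ((g.1 i : ℕ) : ℝ))
        = (-1:ℝ)^(m+1) * Qc (t.length + 1) (m+1) := by
    intro m _
    rw [sumS t.length m, Qc_succ]
    push_cast
    ring
  rw [Finset.sum_congr rfl step3, Finset.sum_range_succ']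
  simp [Qc_succ_zero]

lemma mhn_eq (j n : ℕ) :
    mhn n ((-1) :: List.replicate j (1:ℤ))
      = ∑ m ∈ Finset.range (n+1), (-1:ℝ)^m * Qc (j + 1) m := by
  rw [mhn_cons_eq n (List.replicate j (1:ℤ)) (fun z hz => (List.eq_of_mem_replicate hz)),
    List.length_replicate]
end Stmt9
end Stmt9Aux

open Stmt9 in
theorem stmt9 (k : ℕ) (hk : 1 ≤ k) (x : ℝ) (hx1 : -1 < x) (hx2 : x < 1) :
    Real.log (1 + x) ^ k / (1 - x) =
      (-1) ^ k * (k.factorial : ℝ) *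
        ∑' n : ℕ, mhn n ((-1) :: List.replicate (k - 1) (1:ℤ)) * x ^ n := by
  rcases k with _ | j
  · omega
  simp only [Nat.add_sub_cancel]
  have hx : |x| < 1 := abs_lt.mpr ⟨hx1, hx2⟩
  have hxs : |(-x)| < 1 := by rwa [abs_neg]
  have ha : Summable (fun m : ℕ => ‖(-1:ℝ)^m * Qc (j+1) m * x^m‖) := by
    refine (Qc_summable_norm (j+1) hxs).congr fun m => ?_
    simp only [Real.norm_eq_abs, abs_mul, abs_pow, abs_neg, abs_one, one_pow, one_mul]
    try ring
  have hb : Summable (fun m : ℕ => ‖x^m‖) := by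
    refine (summable_geometric_of_lt_one (abs_nonneg x) hx).congr fun m => ?_
    simp [Real.norm_eq_abs, abs_pow]
  have hprod := tsum_mul_tsum_eq_tsum_sum_range_of_summable_norm ha hb
  have hconv : ∀ n : ℕ,
      (∑ a ∈ Finset.range (n+1), ((-1:ℝ)^a * Qc (j+1) a * x^a) * x^(n-a))
        = (∑ m ∈ Finset.range (n+1), (-1:ℝ)^m * Qc (j+1) m) * x^n := by
    intro n
    rw [Finset.sum_mul]
    refine Finset.sum_congr rfl fun a haa => ?_
    have hale : a ≤ n := by have := Finset.mem_range.mp haa; omega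
    have hxx : x^a * x^(n-a) = x^n := by
      rw [← pow_add]; congr 1; omega
    calc ((-1:ℝ)^a * Qc (j+1) a * x^a) * x^(n-a)
        = ((-1:ℝ)^a * Qc (j+1) a) * (x^a * x^(n-a)) := by ring
      _ = (-1:ℝ)^a * Qc (j+1) a * x^n := by rw [hxx]
  have hA : ∑' m : ℕ, (-1:ℝ)^m * Qc (j+1) m * x^m
      = (-Real.log (1+x))^(j+1) / (((j+1).factorial : ℕ) : ℝ) := by
    have h1 := tsumQ (j+1) hxs
    rw [sub_neg_eq_add] at h1
    rw [← h1]
    refine tsum_congr fun m => ?_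
    rw [show (-x)^m = (-1:ℝ)^m * x^m from by rw [neg_pow]]
    ring
  have hB : ∑' m : ℕ, x^m = (1-x)⁻¹ :=
    tsum_geometric_of_norm_lt_one (by rwa [Real.norm_eq_abs])
  have hrhs : (∑' n : ℕ, mhn n ((-1) :: List.replicate j (1:ℤ)) * x ^ n)
      = ((-Real.log (1+x))^(j+1) / (((j+1).factorial : ℕ) : ℝ)) * (1-x)⁻¹ := by
    rw [← hA, ← hB, hprod]
    refine tsum_congr fun n => ?_
    rw [mhn_eq j n, ← hconv n]
  rw [hrhs]
  have hfac : (((j+1).factorial : ℕ) : ℝ) ≠ 0 :=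
    Nat.cast_ne_zero.mpr (Nat.factorial_ne_zero _)
  have hkey : (-1:ℝ)^(j+1) * (-Real.log (1+x))^(j+1) = (Real.log (1+x))^(j+1) := by
    rw [← mul_pow]; norm_num
  rw [div_eq_mul_inv (Real.log (1+x)^(j+1))]
  rw [show ((-1:ℝ))^(j+1) * (((j+1).factorial : ℕ) : ℝ)
        * ((-Real.log (1+x))^(j+1) / (((j+1).factorial : ℕ) : ℝ) * (1-x)⁻¹)
      = ((-1:ℝ)^(j+1) * (-Real.log (1+x))^(j+1))
        * ((((j+1).factorial : ℕ) : ℝ) / (((j+1).factorial : ℕ) : ℝ)) * (1-x)⁻¹ from by ring]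
  rw [div_self hfac, hkey, mul_one]
end

section
/- For every integer m ≥ 0, Li_{2, {1}_m}(1/2) = ζ(m+2) - Σ_{l=0}^{m+1} ( (ln 2)^{m+1-l}/(m+1-l)! ) · Li_{l+1}(1/2). -/
open scoped BigOperators Classical

noncomputable section

namespace Stmt12

lemma summable_natpow_geom (k : ℕ) {r : ℝ} (hr : |r| < 1) :
    Summable (fun n : ℕ => ((n : ℝ) + 1) ^ k * r ^ n) := by
  have h1 : Summable (fun n : ℕ => (n : ℝ) ^ k * |r| ^ n) := by
    simpa using summable_pow_mul_geometric_of_norm_lt_one (R := ℝ) k (r := |r|) (by simpa using hr)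
  have h2 : Summable (fun n : ℕ => |r| ^ n) := summable_geometric_of_lt_one (abs_nonneg r) hr
  have hb : Summable (fun n : ℕ => (2:ℝ)^k * ((n : ℝ) ^ k * |r| ^ n) + (2:ℝ)^k * |r| ^ n) :=
    (h1.mul_left _).add (h2.mul_left _)
  refine Summable.of_norm_bounded hb ?_
  intro n
  have hrn : (0:ℝ) ≤ |r| ^ n := by positivity
  have hkey : ((n : ℝ) + 1) ^ k ≤ (2:ℝ)^k * (n : ℝ) ^ k + (2:ℝ)^k := by
    rcases Nat.eq_zero_or_pos n with h | h
    · subst h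
      have h3 : (1:ℝ) ≤ 2 ^ k := one_le_pow₀ (by norm_num)
      have h0 : (0:ℝ) ≤ (2:ℝ)^k * (0:ℝ)^k := by positivity
      push_cast
      simp only [zero_add, one_pow]
      linarith
    · have h1 : ((n:ℝ) + 1) ≤ 2 * n := by
        have : (1:ℝ) ≤ n := by exact_mod_cast h
        linarith
      calc ((n : ℝ) + 1) ^ k ≤ (2 * n) ^ k := by
            apply pow_le_pow_left₀ (by positivity) h1
        _ = (2:ℝ)^k * (n:ℝ)^k := by rw [mul_pow]
        _ ≤ _ := by
            have : (0:ℝ) ≤ 2^k := by positivity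
            linarith
  have habs : ‖((n : ℝ) + 1) ^ k * r ^ n‖ = ((n : ℝ) + 1) ^ k * |r| ^ n := by
    rw [Real.norm_eq_abs, abs_mul, abs_pow, abs_pow, abs_of_nonneg (by positivity : (0:ℝ) ≤ (n:ℝ)+1)]
  rw [habs]
  calc ((n : ℝ) + 1) ^ k * |r| ^ n ≤ ((2:ℝ)^k * (n : ℝ) ^ k + (2:ℝ)^k) * |r| ^ n := by
        apply mul_le_mul_of_nonneg_right hkey hrn
    _ = _ := by ring

lemma summable_coeff {c : ℕ → ℝ} {k : ℕ} (hc : ∀ n, |c n| ≤ ((n:ℝ)+1)^k) {x : ℝ}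
    (hx : |x| < 1) : Summable (fun n => c n * x ^ n) := by
  refine Summable.of_norm_bounded (summable_natpow_geom k (r := |x|) (by simpa using hx)) ?_
  intro n
  rw [norm_mul, Real.norm_eq_abs, Real.norm_eq_abs, abs_pow]
  apply mul_le_mul_of_nonneg_right (hc n) (by positivity)

lemma summable_coeff' {c : ℕ → ℝ} {k : ℕ} (hc : ∀ n, |c n| ≤ ((n:ℝ)+1)^k) {x : ℝ}
    (hx : |x| < 1) : Summable (fun n => c n * x ^ (n+1)) := by
  have := (summable_coeff hc hx).mul_right x
  refine this.congr (fun n => by ring)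

lemma hasDerivAt_ptsum {c : ℕ → ℝ} {k : ℕ} (hc : ∀ n, |c n| ≤ ((n:ℝ)+1)^k) {x : ℝ}
    (hx : |x| < 1) :
    HasDerivAt (fun y : ℝ => ∑' n : ℕ, c n * y ^ (n+1)) (∑' n : ℕ, c n * ((n:ℝ)+1) * x ^ n) x := by
  set r : ℝ := (1 + |x|) / 2 with hr
  have hr0 : 0 < r := by positivity
  have hxr : |x| < r := by rw [hr]; linarith
  have hr1 : r < 1 := by rw [hr]; linarith
  have hrabs : |r| < 1 := by rwa [abs_of_nonneg hr0.le]
  have hmain : HasDerivAt (fun y : ℝ => ∑' n : ℕ, c n * y ^ (n+1))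
      (∑' n : ℕ, c n * (((n:ℝ)+1) * x ^ n)) x := by
    apply hasDerivAt_tsum_of_isPreconnected
      (t := Metric.ball (0:ℝ) r)
      (u := fun n : ℕ => ((n:ℝ)+1)^(k+1) * r ^ n)
      (g' := fun (n : ℕ) (y : ℝ) => c n * (((n:ℝ)+1) * y ^ n))
      (y₀ := x)
      (summable_natpow_geom (k+1) hrabs) Metric.isOpen_ball
      ((convex_ball (0:ℝ) r).isPreconnected) ?_ ?_ ?_ ?_ ?_
    · intro n y hy
      have := (hasDerivAt_pow (n+1) y).const_mul (c n)
      simpa [Nat.cast_add, Nat.cast_one, mul_assoc] using this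
    · intro n y hy
      rw [Metric.mem_ball, Real.dist_eq, sub_zero] at hy
      have hyn : |y| ^ n ≤ r ^ n := pow_le_pow_left₀ (abs_nonneg y) hy.le n
      have : ‖c n * (((n:ℝ)+1) * y ^ n)‖ = |c n| * (((n:ℝ)+1) * |y| ^ n) := by
        rw [norm_mul, norm_mul, Real.norm_eq_abs, Real.norm_eq_abs, Real.norm_eq_abs,
          abs_pow, abs_of_nonneg (by positivity : (0:ℝ) ≤ (n:ℝ)+1)]
      rw [this]
      show |c n| * (((n:ℝ)+1) * |y| ^ n) ≤ ((n:ℝ)+1)^(k+1) * r ^ n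
      calc |c n| * (((n:ℝ)+1) * |y| ^ n) ≤ ((n:ℝ)+1)^k * (((n:ℝ)+1) * r ^ n) := by
            apply mul_le_mul (hc n) (by apply mul_le_mul_of_nonneg_left hyn (by positivity))
              (by positivity) (by positivity)
        _ = _ := by ring
    · rw [Metric.mem_ball, Real.dist_eq, sub_zero]; exact hxr
    · exact summable_coeff' hc hx
    · rw [Metric.mem_ball, Real.dist_eq, sub_zero]; exact hxr
  have : (∑' n : ℕ, c n * (((n:ℝ)+1) * x ^ n)) = ∑' n : ℕ, c n * ((n:ℝ)+1) * x ^ n :=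
    tsum_congr fun n => by ring
  rwa [this] at hmain

lemma eq_on_of_hasDerivAt {f g d : ℝ → ℝ} {a b : ℝ}
    (hf : ∀ x ∈ Set.Icc a b, HasDerivAt f (d x) x)
    (hg : ∀ x ∈ Set.Icc a b, HasDerivAt g (d x) x)
    (ha : f a = g a) {x : ℝ} (hx : x ∈ Set.Icc a b) : f x = g x := by
  have key : ∀ y ∈ Set.Icc a b, (f - g) y = (f - g) a := by
    apply constant_of_has_deriv_right_zero
    · intro y hy
      exact (((hf y hy).sub (hg y hy)).continuousAt).continuousWithinAt
    · intro y hy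
      have := ((hf y (Set.mem_Icc.2 ⟨hy.1, hy.2.le⟩)).sub
        (hg y (Set.mem_Icc.2 ⟨hy.1, hy.2.le⟩)))
      simpa using this.hasDerivWithinAt
  have h1 := key x hx
  simp only [Pi.sub_apply] at h1
  have h2 : f a - g a = 0 := by rw [ha, sub_self]
  linarith [h1, h2]


/-- chain weight coefficients -/
def A : ℕ → ℕ → ℝ
  | 0, _ => 1
  | (m+1), n => ∑ k ∈ Finset.Ico 1 n, A m k / k

lemma A_nonneg (m n : ℕ) : 0 ≤ A m n := by
  induction m generalizing n with
  | zero => exact zero_le_one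
  | succ m ih =>
    rw [A]
    apply Finset.sum_nonneg
    intro k hk
    exact div_nonneg (ih k) (by positivity)

lemma A_le (m n : ℕ) : A m n ≤ (n : ℝ) ^ m := by
  induction m generalizing n with
  | zero => simp [A]
  | succ m ih =>
    rw [A]
    calc ∑ k ∈ Finset.Ico 1 n, A m k / k ≤ ∑ k ∈ Finset.Ico 1 n, (n:ℝ)^m := by
          apply Finset.sum_le_sum
          intro k hk
          rw [Finset.mem_Ico] at hk
          have hk1 : (1:ℝ) ≤ k := by exact_mod_cast hk.1
          have hkn : (k:ℝ) ≤ n := by exact_mod_cast hk.2.le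
          calc A m k / k ≤ A m k := div_le_self (A_nonneg m k) hk1
            _ ≤ (k:ℝ)^m := ih k
            _ ≤ (n:ℝ)^m := pow_le_pow_left₀ (by positivity) hkn m
      _ ≤ (n:ℝ) * (n:ℝ)^m := by
          rw [Finset.sum_const, nsmul_eq_mul]
          apply mul_le_mul_of_nonneg_right _ (by positivity)
          rw [Nat.card_Ico]
          exact_mod_cast Nat.sub_le n 1
      _ = (n:ℝ)^(m+1) := by ring

lemma A_succ_bound (m s n : ℕ) : |A m (n+1) / ((n:ℝ)+1)^s| ≤ ((n:ℝ)+1)^m := by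
  have h0 : (0:ℝ) ≤ A m (n+1) := A_nonneg m (n+1)
  have h1 : (1:ℝ) ≤ ((n:ℝ)+1)^s := one_le_pow₀ (by linarith [Nat.cast_nonneg (α := ℝ) n])
  rw [abs_of_nonneg (div_nonneg h0 (by positivity))]
  calc A m (n+1) / ((n:ℝ)+1)^s ≤ A m (n+1) := div_le_self h0 h1
    _ ≤ ((n+1:ℕ):ℝ)^m := A_le m (n+1)
    _ = ((n:ℝ)+1)^m := by push_cast; ring

/-- `b m x = Li_{1,1,...,1}(x)` (m+1 ones) as a power series -/
def b (m : ℕ) (x : ℝ) : ℝ := ∑' n : ℕ, A m (n+1) / ((n:ℝ)+1) * x ^ (n+1)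

lemma b_hasDerivAt (m : ℕ) {x : ℝ} (hx : |x| < 1) :
    HasDerivAt (b m) (∑' n : ℕ, A m (n+1) * x ^ n) x := by
  have hc : ∀ n : ℕ, |A m (n+1) / ((n:ℝ)+1)| ≤ ((n:ℝ)+1)^m := by
    intro n
    have := A_succ_bound m 1 n
    rwa [pow_one] at this
  have h := hasDerivAt_ptsum (c := fun n => A m (n+1) / ((n:ℝ)+1)) (k := m) hc hx
  have he : (∑' n : ℕ, A m (n+1) / ((n:ℝ)+1) * ((n:ℝ)+1) * x ^ n)
      = ∑' n : ℕ, A m (n+1) * x ^ n := by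
    apply tsum_congr
    intro n
    rw [div_mul_cancel₀]
    positivity
  rw [he] at h
  exact h

lemma b_fun_eq (m : ℕ) : b m = fun x : ℝ => ∑' n : ℕ, A m (n+1) / ((n:ℝ)+1) * x ^ (n+1) := rfl

lemma summable_A_pow (m s : ℕ) {x : ℝ} (hx : |x| < 1) :
    Summable (fun n : ℕ => A m (n+1) / ((n:ℝ)+1)^s * x ^ n) :=
  summable_coeff (fun n => A_succ_bound m s n) hx

lemma summable_A_pow' (m s : ℕ) {x : ℝ} (hx : |x| < 1) :
    Summable (fun n : ℕ => A m (n+1) / ((n:ℝ)+1)^s * x ^ (n+1)) :=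
  summable_coeff' (fun n => A_succ_bound m s n) hx

lemma A_step (m n : ℕ) : A (m+1) (n+2) - A (m+1) (n+1) = A m (n+1) / ((n:ℝ)+1) := by
  show (∑ k ∈ Finset.Ico 1 (n+2), A m k / k) - (∑ k ∈ Finset.Ico 1 (n+1), A m k / k) = _
  rw [Finset.sum_Ico_succ_top (by omega : 1 ≤ n+1)]
  push_cast
  ring

lemma A_one (m : ℕ) : A (m+1) 1 = 0 := by
  show (∑ k ∈ Finset.Ico 1 1, A m k / k) = 0
  simp

/-- the key recursion: `(1-x) * Σ A (m+1) (n+1) x^n = b m x`. -/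
lemma b_recursion (m : ℕ) {x : ℝ} (hx : |x| < 1) :
    (1 - x) * (∑' n : ℕ, A (m+1) (n+1) * x ^ n) = b m x := by
  have hsum : Summable (fun n : ℕ => A (m+1) (n+1) * x ^ n) := by
    have := summable_A_pow (m+1) 0 hx
    simpa using this
  have hsum2 : Summable (fun n : ℕ => A (m+1) (n+2) * x ^ (n+1)) :=
    (summable_nat_add_iff 1).2 hsum
  have hsum3 : Summable (fun n : ℕ => A (m+1) (n+1) * x ^ (n+1)) := by
    have := hsum.mul_right x
    exact this.congr (fun n => by ring)
  have hS : (∑' n : ℕ, A (m+1) (n+1) * x ^ n) = ∑' n : ℕ, A (m+1) (n+2) * x ^ (n+1) := by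
    rw [Summable.tsum_eq_zero_add hsum]
    simp [A_one]
  have hxS : x * (∑' n : ℕ, A (m+1) (n+1) * x ^ n) = ∑' n : ℕ, A (m+1) (n+1) * x ^ (n+1) := by
    rw [← tsum_mul_left]
    apply tsum_congr
    intro n
    ring
  rw [sub_mul, one_mul, hxS]
  nth_rewrite 1 [hS]
  rw [← Summable.tsum_sub hsum2 hsum3]
  unfold b
  apply tsum_congr
  intro n
  rw [← sub_mul, A_step]

lemma b_zero_eq (m : ℕ) : b m 0 = 0 := by
  unfold b
  simp

lemma b_eq (m : ℕ) : ∀ {x : ℝ}, 0 ≤ x → x < 1 →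
    b m x = (-Real.log (1-x)) ^ (m+1) / (m+1).factorial := by
  induction m with
  | zero =>
    intro x hx0 hx1
    have habs : ∀ y ∈ Set.Icc (0:ℝ) x, |y| < 1 := by
      intro y hy
      rw [abs_of_nonneg hy.1]
      exact lt_of_le_of_lt hy.2 hx1
    refine eq_on_of_hasDerivAt (f := b 0)
      (g := fun y : ℝ => (-Real.log (1-y))^(0+1) / ((0+1).factorial : ℝ))
      (d := fun y => (1-y)⁻¹) ?_ ?_ ?_ (Set.mem_Icc.2 ⟨hx0, le_refl x⟩)
    · intro y hy
      have h := b_hasDerivAt 0 (habs y hy)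
      have : (∑' n : ℕ, A 0 (n+1) * y ^ n) = (1-y)⁻¹ := by
        have : (∑' n : ℕ, A 0 (n+1) * y ^ n) = ∑' n : ℕ, y ^ n := by
          apply tsum_congr; intro n; show A 0 (n+1) * y ^n = _; rw [A]; ring
        rw [this, tsum_geometric_of_lt_one hy.1 (lt_of_le_of_lt hy.2 hx1)]
      rwa [this] at h
    · intro y hy
      have hy1 : 1 - y ≠ 0 := by
        have := lt_of_le_of_lt hy.2 hx1
        intro h; rw [sub_eq_zero] at h; exact absurd h.symm (ne_of_lt this)
      have hlog : HasDerivAt (fun z : ℝ => -Real.log (1-z)) ((1-y)⁻¹) y := by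
        have h1 : HasDerivAt (fun z : ℝ => 1 - z) (-1) y := by
          simpa using (hasDerivAt_id y).const_sub 1
        have := (Real.hasDerivAt_log hy1).comp y h1
        have h2 := this.neg
        have e : -((1 - y)⁻¹ * -1) = (1-y)⁻¹ := by ring
        rw [e] at h2; exact h2
      have : HasDerivAt (fun z : ℝ => (-Real.log (1-z))^(0+1) / (0+1).factorial)
          ((1-y)⁻¹) y := by
        simpa using hlog
      exact this
    · rw [b_zero_eq]; simp
  | succ m ih =>
    intro x hx0 hx1
    have habs : ∀ y ∈ Set.Icc (0:ℝ) x, |y| < 1 := by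
      intro y hy
      rw [abs_of_nonneg hy.1]
      exact lt_of_le_of_lt hy.2 hx1
    refine eq_on_of_hasDerivAt (f := b (m+1))
      (g := fun y : ℝ => (-Real.log (1-y))^(m+1+1) / ((m+1+1).factorial : ℝ))
      (d := fun y => (-Real.log (1-y))^(m+1) / ((m+1).factorial * (1-y))) ?_ ?_ ?_
      (Set.mem_Icc.2 ⟨hx0, le_refl x⟩)
    · intro y hy
      have hy1 : y < 1 := lt_of_le_of_lt hy.2 hx1
      have hy1' : (0:ℝ) < 1 - y := by linarith
      have h := b_hasDerivAt (m+1) (habs y hy)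
      have key : (∑' n : ℕ, A (m+1) (n+1) * y ^ n)
          = (-Real.log (1-y))^(m+1) / ((m+1).factorial * (1-y)) := by
        have hrec := b_recursion m (habs y hy)
        have hb := ih hy.1 hy1
        rw [hb] at hrec
        field_simp at hrec ⊢
        linarith [hrec]
      rwa [key] at h
    · intro y hy
      have hy1 : y < 1 := lt_of_le_of_lt hy.2 hx1
      have hy1' : (0:ℝ) < 1 - y := by linarith
      have hy1'' : (1:ℝ) - y ≠ 0 := ne_of_gt hy1'
      have hlog : HasDerivAt (fun z : ℝ => -Real.log (1-z)) ((1-y)⁻¹) y := by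
        have h1 : HasDerivAt (fun z : ℝ => 1 - z) (-1) y := by
          simpa using (hasDerivAt_id y).const_sub 1
        have := (Real.hasDerivAt_log hy1'').comp y h1
        have h2 := this.neg
        have e : -((1 - y)⁻¹ * -1) = (1-y)⁻¹ := by ring
        rw [e] at h2; exact h2
      have hpow := hlog.pow (m+2)
      have := hpow.div_const ((m+2).factorial : ℝ)
      have harr : (↑(m + 2) * (-Real.log (1 - y)) ^ (m + 2 - 1) * (1 - y)⁻¹) / ((m+2).factorial : ℝ)
          = (-Real.log (1-y))^(m+1) / ((m+1).factorial * (1-y)) := by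
        have hfac : ((m+2).factorial : ℝ) = (m+2) * (m+1).factorial := by
          rw [Nat.factorial_succ]; push_cast; ring
        rw [hfac]
        have hm2 : ((m:ℝ)+2) ≠ 0 := by positivity
        have hfa : ((m+1).factorial : ℝ) ≠ 0 := by positivity
        rw [show m + 2 - 1 = m + 1 by omega]; push_cast; field_simp
      rw [harr] at this
      exact this
    · rw [b_zero_eq]; simp


/-! ### polylog lemmas -/

lemma polylog_fun_eq (s : ℕ) :
    polylog s = fun x : ℝ => ∑' n : ℕ, (1 / ((n:ℝ)+1)^s) * x ^ (n+1) := by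
  funext x
  exact tsum_congr fun n => by ring

lemma polylog_coeff_bound (s : ℕ) : ∀ n : ℕ, |1 / ((n:ℝ)+1)^s| ≤ ((n:ℝ)+1)^(0:ℕ) := by
  intro n
  have h1 : (1:ℝ) ≤ ((n:ℝ)+1)^s := one_le_pow₀ (by linarith [Nat.cast_nonneg (α := ℝ) n])
  rw [pow_zero, abs_of_nonneg (by positivity)]
  rw [div_le_one (by positivity)]
  exact h1

lemma summable_polylog (s : ℕ) {x : ℝ} (hx : |x| < 1) :
    Summable (fun n : ℕ => x ^ (n+1) / ((n:ℝ)+1)^s) := by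
  have := summable_coeff' (polylog_coeff_bound s) hx
  exact this.congr (fun n => by ring)

lemma polylog_nonneg (s : ℕ) {x : ℝ} (hx : 0 ≤ x) : 0 ≤ polylog s x := by
  apply tsum_nonneg
  intro n
  positivity

lemma polylog_zero_eq {x : ℝ} (hx0 : 0 ≤ x) (hx1 : x < 1) : polylog 0 x = x * (1-x)⁻¹ := by
  unfold polylog
  have h : ∀ n : ℕ, x ^ (n+1) / ((n:ℝ)+1)^(0:ℕ) = x * x ^ n := fun n => by
    rw [pow_zero, div_one, pow_succ]; ring
  rw [tsum_congr h, tsum_mul_left, tsum_geometric_of_lt_one hx0 hx1]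

lemma polylog_one_eq {x : ℝ} (hx0 : 0 ≤ x) (hx1 : x < 1) : polylog 1 x = -Real.log (1-x) := by
  have hb := b_eq 0 hx0 hx1
  unfold polylog
  unfold b at hb
  rw [show -Real.log (1-x) = (-Real.log (1-x))^(0+1)/(((0+1).factorial : ℕ) : ℝ) by norm_num,
    ← hb]
  apply tsum_congr
  intro n
  show x ^ (n+1) / ((n:ℝ)+1)^(1:ℕ) = A 0 (n+1) / ((n:ℝ)+1) * x ^ (n+1)
  rw [pow_one]
  show _ = (1:ℝ) / ((n:ℝ)+1) * x ^ (n+1)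
  ring

lemma hasDerivAt_polylog (s : ℕ) {x : ℝ} (hx0 : 0 < x) (hx1 : x < 1) :
    HasDerivAt (polylog (s+1)) (polylog s x / x) x := by
  have hx : |x| < 1 := by rw [abs_of_nonneg hx0.le]; exact hx1
  have h := hasDerivAt_ptsum (c := fun n => 1 / ((n:ℝ)+1)^(s+1)) (k := 0)
    (polylog_coeff_bound (s+1)) hx
  rw [← polylog_fun_eq (s+1)] at h
  have he : (∑' n : ℕ, 1 / ((n:ℝ)+1)^(s+1) * ((n:ℝ)+1) * x ^ n) = polylog s x / x := by
    have h1 : ∀ n : ℕ, 1 / ((n:ℝ)+1)^(s+1) * ((n:ℝ)+1) * x ^ n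
        = (x ^ (n+1) / ((n:ℝ)+1)^s) / x := fun n => by
      have hn : ((n:ℝ)+1) ≠ 0 := by positivity
      field_simp
      ring
    rw [tsum_congr h1, tsum_div_const]
    rfl
  rwa [he] at h

lemma summable_one_div_add_pow (s : ℕ) (hs : 2 ≤ s) :
    Summable (fun n : ℕ => 1 / ((n:ℝ)+1)^s) := by
  have h := (Real.summable_one_div_nat_pow (p := s)).2 hs
  have h2 := (summable_nat_add_iff 1).2 h
  exact h2.congr (fun n => by push_cast; ring)

lemma polylog_le_rzeta2 (s : ℕ) (hs : 2 ≤ s) {x : ℝ} (hx0 : 0 ≤ x) (hx1 : x ≤ 1) :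
    polylog s x ≤ rzeta 2 := by
  unfold polylog rzeta
  apply Summable.tsum_le_tsum _ _ (summable_one_div_add_pow 2 (le_refl 2))
  · intro n
    have hn1 : (1:ℝ) ≤ (n:ℝ)+1 := by linarith [Nat.cast_nonneg (α := ℝ) n]
    have hp : ((n:ℝ)+1)^2 ≤ ((n:ℝ)+1)^s := pow_le_pow_right₀ hn1 hs
    have hxp : x ^ (n+1) ≤ 1 := pow_le_one₀ hx0 hx1
    calc x ^ (n+1) / ((n:ℝ)+1)^s ≤ 1 / ((n:ℝ)+1)^s := by
          apply div_le_div_of_nonneg_right hxp (by positivity) |>.trans_eq rfl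
      _ ≤ 1 / ((n:ℝ)+1)^2 := by
          apply one_div_le_one_div_of_le (by positivity) hp
  · apply Summable.of_nonneg_of_le _ _ (summable_one_div_add_pow 2 (le_refl 2))
    · intro n; positivity
    · intro n
      have hn1 : (1:ℝ) ≤ (n:ℝ)+1 := by linarith [Nat.cast_nonneg (α := ℝ) n]
      have hp : ((n:ℝ)+1)^2 ≤ ((n:ℝ)+1)^s := pow_le_pow_right₀ hn1 hs
      have hxp : x ^ (n+1) ≤ 1 := pow_le_one₀ hx0 hx1
      calc x ^ (n+1) / ((n:ℝ)+1)^s ≤ 1 / ((n:ℝ)+1)^s := by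
            apply div_le_div_of_nonneg_right hxp (by positivity)
        _ ≤ 1 / ((n:ℝ)+1)^2 := one_div_le_one_div_of_le (by positivity) hp

/-! ### limits as x → 1⁻ -/

lemma tendsto_one_sub : Filter.Tendsto (fun x : ℝ => 1 - x) (nhdsWithin 1 (Set.Iio 1))
    (nhdsWithin 0 (Set.Ioi 0)) := by
  rw [tendsto_nhdsWithin_iff]
  constructor
  · have h : Filter.Tendsto (fun x : ℝ => 1 - x) (nhds 1) (nhds 0) := by
      simpa using (continuous_sub_left (1:ℝ)).tendsto 1
    exact h.mono_left nhdsWithin_le_nhds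
  · filter_upwards [self_mem_nhdsWithin] with x hx
    exact Set.mem_Ioi.2 (by simp only [Set.mem_Iio] at hx; linarith)

lemma tendsto_polylog_at_one (s : ℕ) :
    Filter.Tendsto (fun x => polylog (s+2) x) (nhdsWithin 1 (Set.Iio 1))
      (nhds (rzeta (s+2))) := by
  unfold polylog rzeta
  apply tendsto_tsum_of_dominated_convergence (bound := fun n : ℕ => 1 / ((n:ℝ)+1)^2)
    (summable_one_div_add_pow 2 (le_refl 2))
  · intro n
    have h : Filter.Tendsto (fun x : ℝ => x ^ (n+1) / ((n:ℝ)+1)^(s+2)) (nhds 1)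
        (nhds (1 / ((n:ℝ)+1)^(s+2))) := by
      have := ((continuous_pow (n+1)).div_const (((n:ℝ)+1)^(s+2))).tendsto (1:ℝ)
      simpa using this
    exact h.mono_left nhdsWithin_le_nhds
  · filter_upwards [Ioo_mem_nhdsLT_of_mem (by norm_num : (1:ℝ) ∈ Set.Ioc 0 1)] with x hx n
    have hx0 : 0 ≤ x := hx.1.le
    have hx1 : x ≤ 1 := hx.2.le
    have hn1 : (1:ℝ) ≤ (n:ℝ)+1 := by linarith [Nat.cast_nonneg (α := ℝ) n]
    have hp : ((n:ℝ)+1)^2 ≤ ((n:ℝ)+1)^(s+2) := pow_le_pow_right₀ hn1 (by omega)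
    have hxp : x ^ (n+1) ≤ 1 := pow_le_one₀ hx0 hx1
    rw [Real.norm_eq_abs, abs_of_nonneg (by positivity)]
    calc x ^ (n+1) / ((n:ℝ)+1)^(s+2) ≤ 1 / ((n:ℝ)+1)^(s+2) :=
          div_le_div_of_nonneg_right hxp (by positivity) |>.trans_eq rfl
      _ ≤ 1 / ((n:ℝ)+1)^2 := one_div_le_one_div_of_le (by positivity) hp

lemma tendsto_neg_log_pow (k : ℕ) :
    Filter.Tendsto (fun x : ℝ => (-Real.log x) ^ (k+1)) (nhdsWithin 1 (Set.Iio 1))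
      (nhds 0) := by
  have h : Filter.Tendsto (fun x : ℝ => (-Real.log x) ^ (k+1)) (nhds 1) (nhds 0) := by
    have hc : ContinuousAt (fun x : ℝ => (-Real.log x) ^ (k+1)) 1 :=
      ((Real.continuousAt_log one_ne_zero).neg).pow (k+1)
    have := hc.tendsto
    simpa using this
  exact h.mono_left nhdsWithin_le_nhds

lemma tendsto_log_pow_mul_log (k : ℕ) :
    Filter.Tendsto (fun x : ℝ => (-Real.log x) ^ (k+1) * (-Real.log (1-x)))
      (nhdsWithin 1 (Set.Iio 1)) (nhds 0) := by
  have hg : Filter.Tendsto (fun u : ℝ => (2:ℝ)^(k+1) * (u^(k+1) * (-Real.log u)))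
      (nhdsWithin 0 (Set.Ioi 0)) (nhds 0) := by
    have h1 := (tendsto_log_mul_rpow_nhdsGT_zero
      (r := ((k:ℝ)+1)) (by positivity)).neg.const_mul ((2:ℝ)^(k+1))
    have he : (fun u : ℝ => (2:ℝ)^(k+1) * -(Real.log u * u ^ (((k:ℝ)+1))))
        = fun u : ℝ => (2:ℝ)^(k+1) * (u^(k+1) * (-Real.log u)) := by
      funext u
      have : u ^ (((k:ℝ)+1)) = u ^ (k+1) := by
        rw [show ((k:ℝ)+1) = ((k+1 : ℕ) : ℝ) by push_cast; ring, Real.rpow_natCast]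
      rw [this]; ring
    rw [he] at h1
    simpa using h1
  have hcomp := hg.comp tendsto_one_sub
  apply squeeze_zero' ?_ ?_ hcomp
  · filter_upwards [Ioo_mem_nhdsLT_of_mem (by norm_num : (1:ℝ) ∈ Set.Ioc 0 1)] with x hx
    have h1 : Real.log x ≤ 0 := Real.log_nonpos hx.1.le hx.2.le
    have h2 : Real.log (1-x) ≤ 0 := by
      apply Real.log_nonpos (by linarith [hx.1, hx.2]) (by linarith [hx.1])
    exact mul_nonneg (pow_nonneg (by linarith) _) (by linarith)
  · filter_upwards [Ioo_mem_nhdsLT_of_mem (by norm_num : (1:ℝ) ∈ Set.Ioc (1/2) 1)] with x hx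
    have hx0 : (1:ℝ)/2 < x := hx.1
    have hx1 : x < 1 := hx.2
    have hlog2 : -Real.log (1-x) ≥ 0 := by
      have : Real.log (1-x) ≤ 0 := Real.log_nonpos (by linarith) (by linarith)
      linarith
    have hbound : -Real.log x ≤ 2*(1-x) := by
      have hxpos : 0 < x := by linarith
      have h3 := Real.log_le_sub_one_of_pos (show (0:ℝ) < x⁻¹ by positivity)
      rw [Real.log_inv] at h3
      have h4 : x⁻¹ - 1 = (1-x)/x := by field_simp
      rw [h4] at h3
      have h5 : (1-x)/x ≤ 2*(1-x) := by
        rw [div_le_iff₀ hxpos]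
        nlinarith
      linarith
    have hpow : (-Real.log x)^(k+1) ≤ (2*(1-x))^(k+1) := by
      apply pow_le_pow_left₀ _ hbound
      have : Real.log x ≤ 0 := Real.log_nonpos (by linarith) (by linarith)
      linarith
    show (-Real.log x) ^ (k+1) * (-Real.log (1-x))
        ≤ (fun u : ℝ => (2:ℝ)^(k+1) * (u^(k+1) * (-Real.log u))) ((fun x : ℝ => 1-x) x)
    simp only
    calc (-Real.log x) ^ (k+1) * (-Real.log (1-x))
        ≤ (2*(1-x))^(k+1) * (-Real.log (1-x)) := mul_le_mul_of_nonneg_right hpow hlog2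
      _ = (2:ℝ)^(k+1) * ((1-x)^(k+1) * (-Real.log (1-x))) := by rw [mul_pow]; ring

/-! ### the function L (= Li_{2,1,...,1}) -/

def L (m : ℕ) (x : ℝ) : ℝ := ∑' n : ℕ, A m (n+1) / ((n:ℝ)+1)^2 * x ^ (n+1)

lemma L_nonneg (m : ℕ) {x : ℝ} (hx : 0 ≤ x) : 0 ≤ L m x := by
  apply tsum_nonneg
  intro n
  have := A_nonneg m (n+1)
  positivity

lemma tendsto_L_one_sub (m : ℕ) :
    Filter.Tendsto (fun x : ℝ => L m (1-x)) (nhdsWithin 1 (Set.Iio 1)) (nhds 0) := by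
  set C : ℝ := ∑' n : ℕ, ((n:ℝ)+1)^m * (1/2)^n with hC
  have hCsum : Summable (fun n : ℕ => ((n:ℝ)+1)^m * (1/2:ℝ)^n) :=
    summable_natpow_geom m (by rw [abs_of_nonneg]; norm_num; norm_num)
  have hL : Filter.Tendsto (L m) (nhdsWithin 0 (Set.Ioi 0)) (nhds 0) := by
    have hg : Filter.Tendsto (fun y : ℝ => C * y) (nhdsWithin 0 (Set.Ioi 0)) (nhds 0) := by
      have h := (continuous_mul_left C).tendsto (0:ℝ)
      simp only [mul_zero] at h
      exact h.mono_left nhdsWithin_le_nhds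
    apply squeeze_zero' ?_ ?_ hg
    · filter_upwards [self_mem_nhdsWithin] with y hy
      exact L_nonneg m (le_of_lt hy)
    · filter_upwards [Ioo_mem_nhdsGT_of_mem (by norm_num : (0:ℝ) ∈ Set.Ico 0 (1/2))] with y hy
      have hy0 : 0 < y := hy.1
      have hy2 : y < 1/2 := hy.2
      have hyabs : |y| < 1 := by rw [abs_of_nonneg hy0.le]; linarith
      unfold L
      have hle : ∀ n : ℕ, A m (n+1) / ((n:ℝ)+1)^2 * y ^ (n+1)
          ≤ ((n:ℝ)+1)^m * (1/2)^n * y := by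
        intro n
        have h1 : A m (n+1) / ((n:ℝ)+1)^2 ≤ ((n:ℝ)+1)^m := by
          have := A_succ_bound m 2 n
          have h0 := A_nonneg m (n+1)
          rwa [abs_of_nonneg (by positivity)] at this
        have h2 : y^(n+1) ≤ (1/2:ℝ)^n * y := by
          rw [pow_succ]
          exact mul_le_mul_of_nonneg_right (pow_le_pow_left₀ hy0.le hy2.le n) hy0.le
        have h0 := A_nonneg m (n+1)
        calc A m (n+1) / ((n:ℝ)+1)^2 * y ^ (n+1) ≤ ((n:ℝ)+1)^m * ((1/2:ℝ)^n * y) := by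
              apply mul_le_mul h1 h2 (by positivity) (by positivity)
          _ = ((n:ℝ)+1)^m * (1/2:ℝ)^n * y := by ring
      calc (∑' n : ℕ, A m (n+1) / ((n:ℝ)+1)^2 * y ^ (n+1))
          ≤ ∑' n : ℕ, ((n:ℝ)+1)^m * (1/2:ℝ)^n * y :=
            Summable.tsum_le_tsum hle (summable_A_pow' m 2 hyabs) (hCsum.mul_right y)
        _ = C * y := by rw [tsum_mul_right]
  exact hL.comp tendsto_one_sub


/-! ### Part D : derivative identities and the main functional equation -/

lemma L_hasDerivAt (m : ℕ) {x : ℝ} (hx0 : 0 < x) (hx1 : x < 1) :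
    HasDerivAt (L m) (b m x / x) x := by
  have hxa : |x| < 1 := by rw [abs_of_nonneg hx0.le]; exact hx1
  have h := hasDerivAt_ptsum (c := fun n => A m (n+1) / ((n:ℝ)+1)^2) (k := m)
    (fun n => A_succ_bound m 2 n) hxa
  have hfun : (fun y : ℝ => ∑' n : ℕ, A m (n+1) / ((n:ℝ)+1)^2 * y ^ (n+1)) = L m := rfl
  rw [hfun] at h
  have he : (∑' n : ℕ, A m (n+1) / ((n:ℝ)+1)^2 * ((n:ℝ)+1) * x ^ n) = b m x / x := by
    have hb : b m x = x * ∑' n : ℕ, A m (n+1) / ((n:ℝ)+1) * x ^ n := by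
      unfold b
      rw [← tsum_mul_left]
      exact tsum_congr fun n => by ring
    rw [hb, mul_div_cancel_left₀ _ (ne_of_gt hx0)]
    apply tsum_congr
    intro n
    have hn : ((n:ℝ)+1) ≠ 0 := by positivity
    field_simp
  rwa [he] at h

lemma L_comp_hasDerivAt (m : ℕ) {x : ℝ} (hx0 : 0 < x) (hx1 : x < 1) :
    HasDerivAt (fun y : ℝ => L m (1-y))
      (-((-Real.log x)^(m+1) / (((m+1).factorial : ℝ) * (1-x)))) x := by
  have h1 : (0:ℝ) < 1 - x := by linarith
  have h2 : 1 - x < 1 := by linarith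
  have hL := L_hasDerivAt m h1 h2
  have hin : HasDerivAt (fun y : ℝ => 1 - y) (-1) x := by
    simpa using (hasDerivAt_id x).const_sub 1
  have hcomp := hL.comp x hin
  have hb : b m (1-x) = (-Real.log x)^(m+1) / ((m+1).factorial : ℝ) := by
    have := b_eq m h1.le h2
    simpa using this
  have : b m (1-x) / (1-x) * (-1) = -((-Real.log x)^(m+1) / (((m+1).factorial : ℝ) * (1-x))) := by
    rw [hb]
    field_simp
  rwa [this] at hcomp

def FinS (m : ℕ) (x : ℝ) : ℝ :=
  ∑ l ∈ Finset.range (m+2),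
    (-Real.log x)^(m+1-l) / (((m+1-l).factorial : ℝ)) * polylog (l+1) x

lemma FinS_hasDerivAt (m : ℕ) {x : ℝ} (hx0 : 0 < x) (hx1 : x < 1) :
    HasDerivAt (FinS m) ((-Real.log x)^(m+1) / (((m+1).factorial : ℝ) * (1-x))) x := by
  have hxne : x ≠ 0 := ne_of_gt hx0
  set T : ℕ → ℝ := fun l => (-Real.log x)^(m+1-l) / (((m+1-l).factorial : ℝ)) *
    (polylog l x / x) with hT
  have hterm : ∀ l ∈ Finset.range (m+2),
      HasDerivAt (fun y : ℝ => (-Real.log y)^(m+1-l) / (((m+1-l).factorial : ℝ)) *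
        polylog (l+1) y) (if l = m+1 then T l else T l - T (l+1)) x := by
    intro l hl
    rw [Finset.mem_range] at hl
    by_cases hlm : l = m+1
    · subst hlm
      rw [if_pos rfl]
      have hfun : (fun y : ℝ => (-Real.log y)^(m+1-(m+1)) / (((m+1-(m+1)).factorial : ℝ)) *
          polylog ((m+1)+1) y) = polylog (m+2) := by
        funext y
        simp [Nat.sub_self]
      rw [hfun]
      have hTv : T (m+1) = polylog (m+1) x / x := by
        rw [hT]
        simp [Nat.sub_self]
      rw [hTv]
      exact hasDerivAt_polylog (m+1) hx0 hx1
    · rw [if_neg hlm]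
      have hlm' : l ≤ m := by omega
      set k := m - l with hk
      have hk1 : m + 1 - l = k + 1 := by omega
      have hk2 : m + 1 - (l+1) = k := by omega
      have hlogder : HasDerivAt (fun y : ℝ => (-Real.log y)^(k+1) / (((k+1).factorial : ℝ)))
          ((((k:ℝ)+1) * (-Real.log x)^k * (-(x⁻¹))) / (((k+1).factorial : ℝ))) x := by
        have h1 : HasDerivAt (fun y : ℝ => -Real.log y) (-(x⁻¹)) x :=
          (Real.hasDerivAt_log hxne).neg
        have h2 := h1.pow (k+1)
        have h3 := h2.div_const (((k+1).factorial : ℝ))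
        have : ((k:ℝ)+1) * (-Real.log x)^(k+1-1) * (-(x⁻¹)) =
            (((k:ℝ)+1) * (-Real.log x)^k * (-(x⁻¹))) := by norm_num
        rw [show ((k+1 : ℕ):ℝ) = (k:ℝ)+1 by push_cast; ring] at h3
        rw [this] at h3
        exact h3
      have hP := hasDerivAt_polylog l hx0 hx1
      have hmul := hlogder.mul hP
      have hTl : T l = (-Real.log x)^(k+1) / (((k+1).factorial : ℝ)) * (polylog l x / x) := by
        simp only [hT, hk1]
      have hTl1 : T (l+1) = (-Real.log x)^k / ((k.factorial : ℝ)) * (polylog (l+1) x / x) := by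
        simp only [hT, hk2]
      rw [hTl, hTl1]
      rw [show m + 1 - l = k + 1 from hk1]
      have halg : ((((k:ℝ)+1) * (-Real.log x)^k * (-(x⁻¹))) / (((k+1).factorial : ℝ))) *
            polylog (l+1) x +
            (-Real.log x)^(k+1) / (((k+1).factorial : ℝ)) * (polylog l x / x)
          = (-Real.log x)^(k+1) / (((k+1).factorial : ℝ)) * (polylog l x / x)
            - (-Real.log x)^k / ((k.factorial : ℝ)) * (polylog (l+1) x / x) := by
        have hfact : (((k+1).factorial : ℝ)) = ((k:ℝ)+1) * (k.factorial : ℝ) := by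
          rw [Nat.factorial_succ]; push_cast; ring
        have hfk : (k.factorial : ℝ) ≠ 0 := by positivity
        have hk1' : ((k:ℝ)+1) ≠ 0 := by positivity
        rw [hfact]
        field_simp
        ring
      rw [halg] at hmul
      exact hmul
  have hsum := HasDerivAt.sum hterm
  have hfin : FinS m = fun y : ℝ => ∑ l ∈ Finset.range (m+2),
      (-Real.log y)^(m+1-l) / (((m+1-l).factorial : ℝ)) * polylog (l+1) y := rfl
  rw [hfin]
  have hval : (∑ l ∈ Finset.range (m+2), if l = m+1 then T l else T l - T (l+1)) = T 0 := by
    rw [Finset.sum_range_succ, if_pos rfl]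
    have : (∑ l ∈ Finset.range (m+1), if l = m+1 then T l else T l - T (l+1))
        = ∑ l ∈ Finset.range (m+1), (T l - T (l+1)) := by
      apply Finset.sum_congr rfl
      intro l hl
      rw [Finset.mem_range] at hl
      rw [if_neg (by omega)]
    rw [this, Finset.sum_range_sub']
    ring
  rw [hval] at hsum
  have hT0 : T 0 = (-Real.log x)^(m+1) / (((m+1).factorial : ℝ) * (1-x)) := by
    rw [hT]
    simp only [Nat.sub_zero]
    rw [polylog_zero_eq hx0.le hx1]
    have h1x : (1:ℝ) - x ≠ 0 := by intro h; rw [sub_eq_zero] at h; exact absurd h.symm (ne_of_lt hx1)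
    field_simp
  rw [hT0, Finset.sum_fn] at hsum; exact hsum

lemma tendsto_FinS (m : ℕ) :
    Filter.Tendsto (FinS m) (nhdsWithin 1 (Set.Iio 1)) (nhds (rzeta (m+2))) := by
  have hval : rzeta (m+2) = ∑ l ∈ Finset.range (m+2),
      (if l = m+1 then rzeta (m+2) else 0) := by
    rw [Finset.sum_eq_single (m+1)]
    · rw [if_pos rfl]
    · intro l hl hne; rw [if_neg hne]
    · intro h; exact absurd (Finset.self_mem_range_succ (m+1)) h
  rw [hval]
  have hfin : FinS m = fun x => ∑ l ∈ Finset.range (m+2),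
      (-Real.log x)^(m+1-l) / (((m+1-l).factorial : ℝ)) * polylog (l+1) x := rfl
  rw [hfin]
  apply tendsto_finset_sum
  intro l hl
  rw [Finset.mem_range] at hl
  by_cases hlm : l = m+1
  · subst hlm
    rw [if_pos rfl]
    have hfun : (fun x : ℝ => (-Real.log x)^(m+1-(m+1)) / (((m+1-(m+1)).factorial : ℝ)) *
        polylog ((m+1)+1) x) = fun x => polylog (m+2) x := by
      funext x
      simp [Nat.sub_self]
    rw [hfun]
    exact tendsto_polylog_at_one m
  · rw [if_neg hlm]
    have hlm' : l ≤ m := by omega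
    by_cases hl0 : l = 0
    · subst hl0
      have hev : ∀ᶠ x in nhdsWithin 1 (Set.Iio 1),
          1 / (((m+1-0).factorial : ℝ)) * ((-Real.log x)^(m+1) * (-Real.log (1-x)))
          = (-Real.log x)^(m+1-0) / (((m+1-0).factorial : ℝ)) * polylog (0+1) x := by
        filter_upwards [Ioo_mem_nhdsLT_of_mem (by norm_num : (1:ℝ) ∈ Set.Ioc 0 1)] with x hx
        rw [polylog_one_eq hx.1.le hx.2]
        simp only [Nat.sub_zero]
        ring
      have h1 := (tendsto_log_pow_mul_log m).const_mul (1 / (((m+1-0).factorial : ℝ)))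
      rw [mul_zero] at h1
      exact Filter.Tendsto.congr' hev h1
    · have hl1 : 1 ≤ l := by omega
      have hk1 : m + 1 - l = (m - l) + 1 := by omega
      have hpow := tendsto_neg_log_pow (m - l)
      have hg := hpow.const_mul (rzeta 2 / (((m+1-l).factorial : ℝ)))
      rw [mul_zero] at hg
      apply squeeze_zero' ?_ ?_ hg
      · filter_upwards [Ioo_mem_nhdsLT_of_mem (by norm_num : (1:ℝ) ∈ Set.Ioc 0 1)] with x hx
        have hlog : 0 ≤ -Real.log x := by
          have := Real.log_nonpos hx.1.le hx.2.le
          linarith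
        have hpl := polylog_nonneg (l+1) hx.1.le
        positivity
      · filter_upwards [Ioo_mem_nhdsLT_of_mem (by norm_num : (1:ℝ) ∈ Set.Ioc 0 1)] with x hx
        have hlog : 0 ≤ -Real.log x := by
          have := Real.log_nonpos hx.1.le hx.2.le
          linarith
        have hple := polylog_le_rzeta2 (l+1) (by omega) hx.1.le hx.2.le
        have hpl := polylog_nonneg (l+1) hx.1.le
        calc (-Real.log x)^(m+1-l) / (((m+1-l).factorial : ℝ)) * polylog (l+1) x
            ≤ (-Real.log x)^(m+1-l) / (((m+1-l).factorial : ℝ)) * rzeta 2 := by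
              apply mul_le_mul_of_nonneg_left hple (by positivity)
          _ = rzeta 2 / (((m+1-l).factorial : ℝ)) * (-Real.log x)^(m-l+1) := by
              rw [hk1]; ring

lemma L_half_eq (m : ℕ) : L m (1/2) = rzeta (m+2) - FinS m (1/2) := by
  have hconst : ∀ x ∈ Set.Ioo (1/2 : ℝ) 1,
      L m (1-x) + FinS m x = L m (1-(1/2)) + FinS m (1/2) := by
    intro x hx
    have hd : ∀ y ∈ Set.Icc (1/2 : ℝ) x,
        HasDerivAt (fun z : ℝ => L m (1-z) + FinS m z) (0:ℝ) y := by
      intro y hy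
      have hy0 : (0:ℝ) < y := by have := hy.1; linarith
      have hy1 : y < 1 := lt_of_le_of_lt hy.2 hx.2
      have h1 := (L_comp_hasDerivAt m hy0 hy1).add (FinS_hasDerivAt m hy0 hy1)
      simp at h1; exact h1
    have := eq_on_of_hasDerivAt (f := fun z : ℝ => L m (1-z) + FinS m z)
      (g := fun _ : ℝ => L m (1-(1/2)) + FinS m (1/2)) (d := fun _ => (0:ℝ))
      hd (fun y _ => hasDerivAt_const y _) rfl
      (Set.mem_Icc.2 ⟨hx.1.le, le_refl x⟩)
    exact this
  have hev : ∀ᶠ x in nhdsWithin 1 (Set.Iio 1),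
      L m (1-x) + FinS m x = L m (1-(1/2)) + FinS m (1/2) := by
    filter_upwards [Ioo_mem_nhdsLT_of_mem (by norm_num : (1:ℝ) ∈ Set.Ioc (1/2) 1)] with x hx
    exact hconst x hx
  have hlim : Filter.Tendsto (fun x : ℝ => L m (1-x) + FinS m x)
      (nhdsWithin 1 (Set.Iio 1)) (nhds (rzeta (m+2))) := by
    have := (tendsto_L_one_sub m).add (tendsto_FinS m)
    simpa using this
  have hlim2 : Filter.Tendsto (fun _ : ℝ => L m (1-(1/2)) + FinS m (1/2))
      (nhdsWithin 1 (Set.Iio 1)) (nhds (rzeta (m+2))) := hlim.congr' hev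
  have hne : (nhdsWithin (1:ℝ) (Set.Iio 1)).NeBot := nhdsLT_neBot 1
  have := tendsto_nhds_unique hlim2 tendsto_const_nhds
  rw [show (1:ℝ) - 1/2 = 1/2 by norm_num] at this
  linarith [this]


/-! ### Part A: combinatorial reindexing via ENNReal -/

def Ae : ℕ → ℕ → ENNReal
  | 0, _ => 1
  | (m+1), n => ∑ k ∈ Finset.Ico 1 n, Ae m k / k

lemma Ae_eq_ofReal (m n : ℕ) : Ae m n = ENNReal.ofReal (A m n) := by
  induction m generalizing n with
  | zero => simp [Ae, A]
  | succ m ih =>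
    rw [Ae, A, ENNReal.ofReal_sum_of_nonneg]
    · apply Finset.sum_congr rfl
      intro k hk
      rw [Finset.mem_Ico] at hk
      have hk0 : (0:ℝ) < k := by exact_mod_cast hk.1
      rw [ENNReal.ofReal_div_of_pos hk0, ih, ENNReal.ofReal_natCast]
    · intro k hk
      exact div_nonneg (A_nonneg m k) (by positivity)

lemma strictAnti_tail {m : ℕ} {g : Fin (m+1) → ℕ} (hg : StrictAnti g) :
    StrictAnti (Fin.tail g) := by
  intro i j hij
  exact hg (Fin.succ_lt_succ_iff.2 hij)

lemma strictAnti_cons {m : ℕ} {k : ℕ} {h : Fin m → ℕ} (hh : StrictAnti h)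
    (hk : ∀ i, h i < k) : StrictAnti (Fin.cons k h : Fin (m+1) → ℕ) := by
  intro a b hab
  rcases Fin.eq_zero_or_eq_succ a with ha | ⟨i, rfl⟩
  · subst ha
    rcases Fin.eq_zero_or_eq_succ b with hb | ⟨j, rfl⟩
    · subst hb; exact absurd hab (lt_irrefl _)
    · simp only [Fin.cons_zero, Fin.cons_succ]
      exact hk j
  · rcases Fin.eq_zero_or_eq_succ b with hb | ⟨j, rfl⟩
    · subst hb; exact absurd hab (Fin.not_lt_zero _).elim
    · simp only [Fin.cons_succ]
      exact hh (Fin.succ_lt_succ_iff.1 hab)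

/-- peel off the head of a strictly decreasing bounded chain -/
def chainEquiv (m N : ℕ) :
    {g : Fin (m+1) → ℕ // StrictAnti g ∧ (∀ i, 0 < g i) ∧ ∀ i, g i < N} ≃
    Σ k : {k : ℕ // k ∈ Finset.Ico 1 N},
      {h : Fin m → ℕ // StrictAnti h ∧ (∀ i, 0 < h i) ∧ ∀ i, h i < (k : ℕ)} where
  toFun g := ⟨⟨g.1 0, Finset.mem_Ico.2 ⟨g.2.2.1 0, g.2.2.2 0⟩⟩,
    ⟨Fin.tail g.1, strictAnti_tail g.2.1, fun i => g.2.2.1 i.succ,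
      fun i => g.2.1 (Fin.succ_pos i)⟩⟩
  invFun x := ⟨Fin.cons (x.1 : ℕ) x.2.1, by
    refine ⟨strictAnti_cons x.2.2.1 x.2.2.2.2, ?_, ?_⟩
    · intro i
      rcases Fin.eq_zero_or_eq_succ i with hi | ⟨j, rfl⟩
      · subst hi
        simpa using Nat.lt_of_lt_of_le Nat.zero_lt_one (Finset.mem_Ico.1 x.1.2).1
      · simpa using x.2.2.2.1 j
    · intro i
      rcases Fin.eq_zero_or_eq_succ i with hi | ⟨j, rfl⟩
      · subst hi
        simpa using (Finset.mem_Ico.1 x.1.2).2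
      · have h1 := x.2.2.2.2 j
        have h2 := (Finset.mem_Ico.1 x.1.2).2
        simpa using lt_trans h1 h2⟩
  left_inv g := by
    apply Subtype.ext
    exact Fin.cons_self_tail g.1
  right_inv x := by
    rcases x with ⟨⟨k, hk⟩, ⟨h, hh⟩⟩
    rfl

lemma chain_tsum (m N : ℕ) :
    ∑' g : {g : Fin m → ℕ // StrictAnti g ∧ (∀ i, 0 < g i) ∧ ∀ i, g i < N},
      (∏ i : Fin m, ((g.1 i : ENNReal)))⁻¹ = Ae m N := by
  induction m generalizing N with
  | zero =>
    have hu : Unique {g : Fin 0 → ℕ // StrictAnti g ∧ (∀ i, 0 < g i) ∧ ∀ i, g i < N} := by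
      refine ⟨⟨⟨fun i => i.elim0, fun a b hab => a.elim0, fun i => i.elim0, fun i => i.elim0⟩⟩, ?_⟩
      intro a
      apply Subtype.ext
      funext i
      exact i.elim0
    rw [tsum_eq_single (hu.default) (fun b hb => absurd (hu.uniq b) hb)]
    simp [Ae]
  | succ m ih =>
    rw [← Equiv.tsum_eq (chainEquiv m N).symm]
    rw [ENNReal.tsum_sigma']
    have hinner : ∀ k : {k : ℕ // k ∈ Finset.Ico 1 N},
        (∑' h : {h : Fin m → ℕ // StrictAnti h ∧ (∀ i, 0 < h i) ∧ ∀ i, h i < (k:ℕ)},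
          (∏ i : Fin (m+1), (((chainEquiv m N).symm ⟨k, h⟩).1 i : ENNReal))⁻¹)
        = ((k:ℕ) : ENNReal)⁻¹ * Ae m k := by
      intro k
      rw [← ih (k:ℕ), ← ENNReal.tsum_mul_left]
      apply tsum_congr
      intro h
      have hprod : (∏ i : Fin (m+1), (((chainEquiv m N).symm ⟨k, h⟩).1 i : ENNReal))
          = ((k:ℕ) : ENNReal) * ∏ i : Fin m, ((h.1 i : ENNReal)) := by
        have : ((chainEquiv m N).symm ⟨k, h⟩).1 = Fin.cons (k:ℕ) h.1 := rfl
        rw [this, Fin.prod_univ_succ]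
        simp [Fin.cons_succ]
      have hk0 : (((k:ℕ) : ℕ) : ENNReal) ≠ 0 := by
        have hk1 := (Finset.mem_Ico.1 k.2).1
        exact_mod_cast (by omega : ((k:ℕ):ℕ) ≠ 0)
      rw [hprod, ENNReal.mul_inv (Or.inl hk0) (Or.inl (ENNReal.natCast_ne_top _))]
    rw [tsum_congr hinner,
      Finset.tsum_subtype (Finset.Ico 1 N) (fun k : ℕ => ((k : ENNReal))⁻¹ * Ae m k)]
    rw [Ae]
    apply Finset.sum_congr rfl
    intro k hk
    rw [ENNReal.div_eq_inv_mul]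


lemma sup_eq {k : ℕ} (f : Fin (k+1) → ℕ) (hf : StrictAnti f) : Finset.univ.sup f = f 0 :=
  le_antisymm (Finset.sup_le fun i _ => hf.antitone (Fin.zero_le i))
    (Finset.le_sup (Finset.mem_univ 0))

def topEquiv (k : ℕ) :
    {f : Fin (k+1) → ℕ // StrictAnti f ∧ ∀ i, 0 < f i} ≃
    Σ n : ℕ, {h : Fin k → ℕ // StrictAnti h ∧ (∀ i, 0 < h i) ∧ ∀ i, h i < n+1} where
  toFun f := ⟨f.1 0 - 1, ⟨Fin.tail f.1, strictAnti_tail f.2.1, fun i => f.2.2 i.succ,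
    fun i => by
      have h1 : f.1 i.succ < f.1 0 := f.2.1 (Fin.succ_pos i)
      have h2 : 0 < f.1 0 := f.2.2 0
      have h3 : Fin.tail f.1 i = f.1 i.succ := rfl
      show Fin.tail f.1 i < f.1 0 - 1 + 1
      omega⟩⟩
  invFun x := ⟨Fin.cons (x.1+1) x.2.1, strictAnti_cons x.2.2.1 x.2.2.2.2, fun i => by
    rcases Fin.eq_zero_or_eq_succ i with hi | ⟨j, rfl⟩
    · subst hi; simp
    · simpa using x.2.2.2.1 j⟩
  left_inv f := by
    apply Subtype.ext
    have h : f.1 0 - 1 + 1 = f.1 0 := Nat.succ_pred_eq_of_pos (f.2.2 0)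
    show Fin.cons (f.1 0 - 1 + 1) (Fin.tail f.1) = f.1
    rw [h, Fin.cons_self_tail]
  right_inv x := by
    rcases x with ⟨n, h, hh⟩
    rfl

/-- the natural denominator -/
def D (k : ℕ) (f : Fin (k+1) → ℕ) : ℕ := (f 0)^2 * ∏ i : Fin k, f i.succ

lemma D_pos {k : ℕ} {f : Fin (k+1) → ℕ} (hf : ∀ i, 0 < f i) : 0 < D k f := by
  unfold D
  have h1 : 0 < f 0 := hf 0
  have h2 : ∀ i : Fin k, 0 < f i.succ := fun i => hf i.succ
  exact Nat.mul_pos (pow_pos h1 2) (Finset.prod_pos (fun i _ => h2 i))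

lemma tsum_toReal_of {ι : Type*} (f : ι → ℝ) (hf : ∀ i, 0 ≤ f i) :
    ∑' i, f i = (∑' i, ENNReal.ofReal (f i)).toReal := by
  rw [ENNReal.tsum_toReal_eq (fun a => ENNReal.ofReal_ne_top)]
  exact tsum_congr fun i => (ENNReal.toReal_ofReal (hf i)).symm

lemma mpolylog_eq_L (t : List ℕ) (ht : ∀ i : Fin t.length, t.get i = 1) {x : ℝ}
    (hx0 : 0 ≤ x) :
    mpolylog (2 :: t) x = ∑' n : ℕ, A t.length (n+1) / ((n:ℝ)+1)^2 * x^(n+1) := by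
  classical
  set k := t.length with hk
  set X := ENNReal.ofReal x with hX
  have h0 : mpolylog (2 :: t) x
      = ∑' f : {f : Fin (k+1) → ℕ // StrictAnti f ∧ ∀ i, 0 < f i},
          x ^ (Finset.univ.sup f.1) / ∏ i : Fin (k+1), ((f.1 i : ℝ)) ^ ((2::t).get i) := rfl
  have hterm : ∀ f : {f : Fin (k+1) → ℕ // StrictAnti f ∧ ∀ i, 0 < f i},
      x ^ (Finset.univ.sup f.1) / ∏ i : Fin (k+1), ((f.1 i : ℝ)) ^ ((2::t).get i)
      = x ^ (f.1 0) / ((D k f.1 : ℕ) : ℝ) := by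
    intro f
    rw [sup_eq f.1 f.2.1]
    congr 1
    rw [Fin.prod_univ_succ]
    unfold D
    push_cast
    have hget0 : ((2::t).get (0 : Fin (k+1)) : ℕ) = 2 := rfl
    rw [hget0]
    congr 1
    apply Finset.prod_congr rfl
    intro i _
    have hget : (2::t).get ((i : Fin k).succ) = t.get i := rfl
    rw [hget, ht i, pow_one]
  have hofReal : ∀ f : {f : Fin (k+1) → ℕ // StrictAnti f ∧ ∀ i, 0 < f i},
      ENNReal.ofReal (x ^ (f.1 0) / ((D k f.1 : ℕ) : ℝ))
        = X ^ (f.1 0) / ((D k f.1 : ℕ) : ENNReal) := by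
    intro f
    have hD : (0:ℝ) < ((D k f.1 : ℕ) : ℝ) := by exact_mod_cast D_pos f.2.2
    rw [ENNReal.ofReal_div_of_pos hD, ENNReal.ofReal_pow hx0, ENNReal.ofReal_natCast]
  have key : (∑' f : {f : Fin (k+1) → ℕ // StrictAnti f ∧ ∀ i, 0 < f i},
      X ^ (f.1 0) / ((D k f.1 : ℕ) : ENNReal))
      = ∑' n : ℕ, X^(n+1) * ((((n+1)^2 : ℕ) : ENNReal))⁻¹ * Ae k (n+1) := by
    rw [← Equiv.tsum_eq (topEquiv k).symm]
    rw [ENNReal.tsum_sigma']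
    apply tsum_congr
    intro n
    have hstep : ∀ h : {h : Fin k → ℕ // StrictAnti h ∧ (∀ i, 0 < h i) ∧ ∀ i, h i < n+1},
        X ^ ((((topEquiv k).symm ⟨n, h⟩).1 : Fin (k+1) → ℕ) 0)
          / ((D k ((topEquiv k).symm ⟨n, h⟩).1 : ℕ) : ENNReal)
        = (X^(n+1) * ((((n+1)^2 : ℕ) : ENNReal))⁻¹) * (∏ i : Fin k, ((h.1 i : ENNReal)))⁻¹ := by
      intro h
      have hfun : (((topEquiv k).symm ⟨n, h⟩).1 : Fin (k+1) → ℕ) = Fin.cons (n+1) h.1 := rfl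
      rw [hfun]
      have hzero : (Fin.cons (n+1) h.1 : Fin (k+1) → ℕ) 0 = n+1 := rfl
      have hDval : D k (Fin.cons (n+1) h.1) = (n+1)^2 * ∏ i : Fin k, h.1 i := rfl
      rw [hzero, hDval]
      have hcast : (((n+1)^2 * ∏ i : Fin k, h.1 i : ℕ) : ENNReal)
          = (((n+1)^2 : ℕ) : ENNReal) * ∏ i : Fin k, ((h.1 i : ENNReal)) := by
        push_cast
        ring
      rw [hcast, ENNReal.div_eq_inv_mul,
        ENNReal.mul_inv (Or.inl (by exact_mod_cast (by positivity : ((n+1)^2 : ℕ) ≠ 0)))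
          (Or.inl (ENNReal.natCast_ne_top _))]
      ring
    rw [tsum_congr hstep, ENNReal.tsum_mul_left, chain_tsum]
  have hg : ∀ n : ℕ, X^(n+1) * ((((n+1)^2 : ℕ) : ENNReal))⁻¹ * Ae k (n+1)
      = ENNReal.ofReal (A k (n+1) / ((n:ℝ)+1)^2 * x^(n+1)) := by
    intro n
    have hpos : (0:ℝ) < ((n:ℝ)+1)^2 := by positivity
    have hA := A_nonneg k (n+1)
    rw [ENNReal.ofReal_mul (by positivity), ENNReal.ofReal_div_of_pos hpos,
      ENNReal.ofReal_pow hx0, Ae_eq_ofReal]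
    have hc : ENNReal.ofReal (((n:ℝ)+1)^2) = (((n+1)^2 : ℕ) : ENNReal) := by
      rw [show ((n:ℝ)+1)^2 = (((n+1)^2 : ℕ) : ℝ) by push_cast; ring, ENNReal.ofReal_natCast]
    rw [hc, ENNReal.div_eq_inv_mul]
    ring
  calc mpolylog (2 :: t) x
      = ∑' f : {f : Fin (k+1) → ℕ // StrictAnti f ∧ ∀ i, 0 < f i},
          x ^ (f.1 0) / ((D k f.1 : ℕ) : ℝ) := by rw [h0]; exact tsum_congr hterm
    _ = (∑' f : {f : Fin (k+1) → ℕ // StrictAnti f ∧ ∀ i, 0 < f i},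
          ENNReal.ofReal (x ^ (f.1 0) / ((D k f.1 : ℕ) : ℝ))).toReal :=
        tsum_toReal_of _ (fun f => by positivity)
    _ = (∑' f : {f : Fin (k+1) → ℕ // StrictAnti f ∧ ∀ i, 0 < f i},
          X ^ (f.1 0) / ((D k f.1 : ℕ) : ENNReal)).toReal := by rw [tsum_congr hofReal]
    _ = (∑' n : ℕ, X^(n+1) * ((((n+1)^2 : ℕ) : ENNReal))⁻¹ * Ae k (n+1)).toReal := by rw [key]
    _ = (∑' n : ℕ, ENNReal.ofReal (A k (n+1) / ((n:ℝ)+1)^2 * x^(n+1))).toReal := by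
        rw [tsum_congr hg]
    _ = ∑' n : ℕ, A k (n+1) / ((n:ℝ)+1)^2 * x^(n+1) :=
        (tsum_toReal_of _ (fun n => by have := A_nonneg k (n+1); positivity)).symm


end Stmt12

end

theorem stmt12 (m : ℕ) :
    mpolylog (2 :: List.replicate m 1) (1 / 2) =
      rzeta (m + 2) - ∑ l ∈ Finset.range (m + 2),
        Real.log 2 ^ (m + 1 - l) / ((m + 1 - l).factorial : ℝ) * polylog (l + 1) (1 / 2) := by
  have ht : ∀ i : Fin (List.replicate m 1).length, (List.replicate m 1).get i = 1 := by
    intro i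
    simp
  have hlen : (List.replicate m 1).length = m := List.length_replicate
  have h1 := Stmt12.mpolylog_eq_L (List.replicate m 1) ht (by norm_num : (0:ℝ) ≤ 1/2)
  rw [hlen] at h1
  have h2 : (∑' n : ℕ, Stmt12.A m (n+1) / ((n:ℝ)+1)^2 * (1/2:ℝ)^(n+1))
      = Stmt12.L m (1/2) := rfl
  rw [h1, h2, Stmt12.L_half_eq m]
  congr 1
  unfold Stmt12.FinS
  apply Finset.sum_congr rfl
  intro l hl
  rw [show -Real.log (1/2 : ℝ) = Real.log 2 by
    rw [one_div, Real.log_inv]; ring]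
end
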